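/- arXiv:2202.07002 — 8 statements merged into one kernel-verified Lean document; each statement's English description precedes it below -/
import Mathlib

section
/- Let B be a difference-closed submonoid of ℕ₀ⁿ (i.e. B = ℤB ∩ ℕ₀ⁿ where ℤB is the subgroup of ℤⁿ generated by B). If the quotient group ℤⁿ/ℤB is torsion-free, then B is contained in the subgroup of ℤⁿ generated by { m ∈ B : |supp(m)| ≤ 1 + 2s }, where s is the rank of ℤⁿ/ℤB. -/
/-!
Let `ψ : ℤⁿ → Q` be a linear map to a finitely generated torsion-free group of rank `s` (for the
theorem, `ℤⁿ → ℤⁿ/ℤB`, whose nonnegative kernel vectors are `B` by difference-closedness). For a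
nonnegative `w ∈ ker ψ` with support `S` let `L_S` be the kernel vectors supported in `S`. By
induction on `|S|` every element of `L_S` is an integer combination of nonnegative kernel vectors
with support of size at most `1 + 2s`. If `|S| ≤ 1 + 2s`, write `v = (v + N w) - N w`.

Otherwise call `F ⊆ S` flat if `F` is the set where some `c ∈ L_S` maximises `c / w` and every
element of `L_S` is proportional to `w` on `F`. For `j ∈ F` the vector `c_j w - w_j c` is
nonnegative with support `S \ F`, so by induction the vectors of `L_S` vanishing on a flat are
generated; it remains to see that they span `L_S`. Perturbing `c` to `M c + u` shrinks its set of
maximisers until it is flat, so every such set contains a flat, and a vector of `L_S` vanishing on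
the union `T` of the flats is zero. Hence `|S| - s ≤ rk L_S ≤ |T|`, i.e. `|S \ T| ≤ s` and
`1 + |S \ T| < rk L_S`. If the span were proper, some nonzero `θ : L_S → ℤ/p` would kill it; then
`θ v = 0` forces `p ∣ v_j` on `T`, and a dimension count over `ℤ/p` yields `v ∉ p L_S` with
`θ v = 0` and `p ∣ v_j` on `S \ T`. All coordinates of `v` are then divisible by `p`, and since
`Q` is torsion-free, `v ∈ p L_S`: a contradiction.
-/

open Finset Filter Module

namespace SmallSupport

section ZModFunctionals

variable {M : Type*} [AddCommGroup M]

lemma dvd_of_ker_le_ker {p : ℕ} [Fact p.Prime] (f : M →ₗ[ℤ] ℤ) (θ : M →ₗ[ℤ] ZMod p)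
    (hker : LinearMap.ker f ≤ LinearMap.ker θ) (hθ : θ ≠ 0) {v : M} (hv : θ v = 0) :
    (p : ℤ) ∣ f v := by
  set d := Submodule.IsPrincipal.generator (LinearMap.range f)
  have hd : ∀ u, d ∣ f u := fun u =>
    (Submodule.IsPrincipal.mem_iff_generator_dvd _).1 (LinearMap.mem_range_self f u)
  obtain ⟨e, he⟩ : ∃ e, f e = d :=
    LinearMap.mem_range.1 (Submodule.IsPrincipal.generator_mem (LinearMap.range f))
  have hθu : ∀ u, θ u = (f u / d) • θ e := fun u => by
    have hmem : u - (f u / d) • e ∈ LinearMap.ker θ := hker <| by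
      simp [he, Int.ediv_mul_cancel (hd u)]
    rw [LinearMap.mem_ker, map_sub, map_smul, sub_eq_zero] at hmem
    exact hmem
  have hθe : θ e ≠ 0 := fun h => hθ <| LinearMap.ext fun u => by simp [hθu u, h]
  have hcast : ((f v / d : ℤ) : ZMod p) = 0 := by
    rw [hθu v, ← Int.cast_smul_eq_zsmul (ZMod p), smul_eq_mul] at hv
    exact (mul_eq_zero.1 hv).resolve_right hθe
  exact ((ZMod.intCast_zmod_eq_zero_iff_dvd _ _).1 hcast).trans (Int.ediv_dvd_of_dvd (hd v))

lemma exists_map_eq_zero_forall_ne_smul [Module.Free ℤ M] [Module.Finite ℤ M] {κ : Type*}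
    [Fintype κ] (p : ℕ) [Fact p.Prime] (Φ : M →ₗ[ℤ] κ → ZMod p)
    (hκ : Fintype.card κ < finrank ℤ M) : ∃ v, Φ v = 0 ∧ ∀ u, v ≠ (p : ℤ) • u := by
  let b := Module.finBasis ℤ M
  let A : Matrix κ (Fin (finrank ℤ M)) (ZMod p) := fun o i => Φ (b i) o
  obtain ⟨x, hAx, hx⟩ : ∃ x, A.mulVec x = 0 ∧ x ≠ 0 := by
    by_contra! h
    have hinj : Function.Injective (Matrix.toLin' A) := by
      rw [← LinearMap.ker_eq_bot, Submodule.eq_bot_iff]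
      exact fun x hx => h x hx
    have := LinearMap.finrank_le_finrank_of_injective hinj
    simp only [finrank_fintype_fun_eq_card, Fintype.card_fin] at this
    omega
  set X : Fin (finrank ℤ M) → ℤ := fun i => (x i).val
  have hX : ∀ i, (X i : ZMod p) = x i := fun i => by simp [X]
  refine ⟨∑ i, X i • b i, ?_, fun u hu => hx ?_⟩
  · ext o
    have := congrFun hAx o
    simp only [Matrix.mulVec, dotProduct, Pi.zero_apply] at this
    simp [map_sum, ← this, A, ← hX, mul_comm]
  · funext i
    have hrepr := congrArg (fun v => b.repr v i) hu
    simp only [b.repr_sum_self, map_smul, Finsupp.smul_apply, smul_eq_mul] at hrepr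
    rw [← hX, hrepr]
    simp

lemma eq_top_of_forall_zmod [Module.Finite ℤ M] (N : Submodule ℤ M)
    (h : ∀ p : ℕ, p.Prime → ∀ θ : M →ₗ[ℤ] ZMod p, N ≤ LinearMap.ker θ → θ = 0) : N = ⊤ := by
  by_contra hN
  obtain ⟨P, hP, hNP⟩ := (eq_top_or_exists_le_coatom N).resolve_left hN
  have : IsSimpleModule ℤ (M ⧸ P) := isSimpleModule_iff_isCoatom.2 hP
  obtain ⟨I, hI, ⟨e⟩⟩ := isSimpleModule_iff_quot_maximal.1 this
  obtain ⟨a, rfl⟩ : ∃ a : ℤ, I = Ideal.span {a} :=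
    ⟨_, (Submodule.IsPrincipal.span_singleton_generator I).symm⟩
  have ha : a ≠ 0 := by
    rintro rfl
    exact (Ideal.bot_lt_of_maximal _ Int.not_isField).ne (Ideal.span_singleton_eq_bot.2 rfl).symm
  have hp : a.natAbs.Prime :=
    Int.prime_iff_natAbs_prime.1 ((Ideal.span_singleton_prime ha).1 hI.isPrime)
  have : Fact a.natAbs.Prime := ⟨hp⟩
  let θ : M →ₗ[ℤ] ZMod a.natAbs :=
    (Int.quotientSpanEquivZMod a).toAddEquiv.toIntLinearEquiv.toLinearMap ∘ₗ e.toLinearMap ∘ₗ P.mkQ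
  have hθ : θ ≠ 0 := by
    intro h0
    obtain ⟨q, hq⟩ := e.surjective 1
    obtain ⟨m, rfl⟩ := P.mkQ_surjective q
    have : θ m = 1 := by simpa [θ] using hq
    simp [h0] at this
  exact hθ (h _ hp θ fun x hx => by simpa [θ] using hNP hx)

end ZModFunctionals

section Maximizers

variable {ι 𝕜 : Type*}

def maximizers [LinearOrder 𝕜] (S : Finset ι) (f : ι → 𝕜) : Finset ι :=
  {j ∈ S | ∀ i ∈ S, f i ≤ f j}

variable {S : Finset ι}

section LinearOrder
variable [LinearOrder 𝕜] {f : ι → 𝕜} {j : ι}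

lemma mem_maximizers : j ∈ maximizers S f ↔ j ∈ S ∧ ∀ i ∈ S, f i ≤ f j := mem_filter

lemma maximizers_subset : maximizers S f ⊆ S := filter_subset _ _

lemma mem_maximizers_iff_le {i : ι} (hj : j ∈ maximizers S f) (hi : i ∈ S) :
    i ∈ maximizers S f ↔ f j ≤ f i :=
  ⟨fun h => (mem_maximizers.1 h).2 j (maximizers_subset hj),
    fun h => mem_maximizers.2 ⟨hi, fun k hk => ((mem_maximizers.1 hj).2 k hk).trans h⟩⟩

lemma maximizers_nonempty (hS : S.Nonempty) : (maximizers S f).Nonempty := by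
  obtain ⟨j, hj, hmax⟩ := exists_max_image S f hS
  exact ⟨j, mem_maximizers.2 ⟨hj, hmax⟩⟩

end LinearOrder

lemma eventually_maximizers_subset [Field 𝕜] [LinearOrder 𝕜] [IsStrictOrderedRing 𝕜]
    [Archimedean 𝕜] (S : Finset ι) (f g : ι → 𝕜) :
    ∀ᶠ M : ℕ in atTop, maximizers S (fun j => M * f j + g j) ⊆ maximizers (maximizers S f) g := by
  have hlarge : ∀ᶠ M : ℕ in atTop, ∀ i ∈ S, ∀ j ∈ S, f j < f i → g j - g i < M * (f i - f j) := by
    simp only [eventually_all_finset]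
    intro i _ j _
    by_cases h : f j < f i
    · have hM := tendsto_natCast_atTop_atTop.atTop_mul_const (sub_pos.2 h)
      filter_upwards [hM.eventually_gt_atTop (g j - g i)] with M hM _ using hM
    · exact Eventually.of_forall fun _ h' => absurd h' h
  filter_upwards [hlarge] with M hM j hj
  rw [mem_maximizers] at hj
  have hjf : j ∈ maximizers S f := mem_maximizers.2 ⟨hj.1, fun i hi => not_lt.1 fun hlt =>
    (hM i hi j hj.1 hlt).not_ge (by linarith [hj.2 i hi])⟩
  refine mem_maximizers.2 ⟨hjf, fun i hi => ?_⟩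
  have hfij : f i = f j := le_antisymm ((mem_maximizers.1 hjf).2 i (maximizers_subset hi))
    ((mem_maximizers.1 hi).2 j hj.1)
  have hji := hj.2 i (maximizers_subset hi)
  rw [hfij] at hji
  linarith

end Maximizers

section Flats

variable {ι : Type*}

def ratio (w c : ι → ℤ) (j : ι) : ℚ := c j / w j

lemma ratio_smul_add (w c u : ι → ℤ) (M : ℕ) :
    ratio w ((M : ℤ) • c + u) = fun j => M * ratio w c j + ratio w u j := by
  ext j
  simp only [ratio, Pi.add_apply, Pi.smul_apply, smul_eq_mul]
  push_cast
  ring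

def IsFlat (L : Submodule ℤ (ι → ℤ)) (S : Finset ι) (w : ι → ℤ) (F : Finset ι) : Prop :=
  (∃ c ∈ L, maximizers S (ratio w c) = F) ∧
    ∀ u ∈ L, ∀ i ∈ F, ∀ j ∈ F, ratio w u i = ratio w u j

variable {L : Submodule ℤ (ι → ℤ)} {S : Finset ι} {w : ι → ℤ}

lemma exists_isFlat_subset_maximizers {c : ι → ℤ} (hc : c ∈ L) :
    ∃ F, IsFlat L S w F ∧ F ⊆ maximizers S (ratio w c) := by
  induction hk : #(maximizers S (ratio w c)) using Nat.strong_induction_on generalizing c with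
  | _ k ih =>
  set A := maximizers S (ratio w c)
  by_cases hflat : ∀ u ∈ L, ∀ i ∈ A, ∀ j ∈ A, ratio w u i = ratio w u j
  · exact ⟨A, ⟨⟨c, hc, rfl⟩, hflat⟩, subset_rfl⟩
  push Not at hflat
  obtain ⟨u, hu, i, hi, j, hj, hij⟩ := hflat
  obtain ⟨M, hM⟩ := (eventually_maximizers_subset S (ratio w c) (ratio w u)).exists
  rw [← ratio_smul_add] at hM
  have hproper : maximizers A (ratio w u) ⊂ A := by
    refine Finset.ssubset_iff_subset_ne.2 ⟨maximizers_subset, fun h => hij ?_⟩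
    have hi' : i ∈ maximizers A (ratio w u) := by rwa [h]
    have hj' : j ∈ maximizers A (ratio w u) := by rwa [h]
    exact le_antisymm ((mem_maximizers.1 hj').2 i hi) ((mem_maximizers.1 hi').2 j hj)
  obtain ⟨F, hF, hFsub⟩ := ih _ (hk ▸ card_lt_card (hM.trans_ssubset hproper))
    (L.add_mem (L.smul_mem _ hc) hu) rfl
  exact ⟨F, hF, hFsub.trans (hM.trans maximizers_subset)⟩

lemma IsFlat.subset {F : Finset ι} (hF : IsFlat L S w F) : F ⊆ S := by
  obtain ⟨⟨c, -, rfl⟩, -⟩ := hF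
  exact maximizers_subset

lemma IsFlat.nonempty (hS : S.Nonempty) {F : Finset ι} (hF : IsFlat L S w F) : F.Nonempty := by
  obtain ⟨⟨c, -, rfl⟩, -⟩ := hF
  exact maximizers_nonempty hS

end Flats

section SupportedKernel

variable {ι Q : Type*} [AddCommGroup Q]

def supportedKer (ψ : (ι → ℤ) →ₗ[ℤ] Q) (S : Finset ι) : Submodule ℤ (ι → ℤ) :=
  LinearMap.ker (ψ.prod (LinearMap.funLeft ℤ ℤ ((↑) : {j // j ∉ S} → ι)))

variable {ψ : (ι → ℤ) →ₗ[ℤ] Q} {S : Finset ι} {v : ι → ℤ}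

lemma mem_supportedKer : v ∈ supportedKer ψ S ↔ ψ v = 0 ∧ ∀ j ∉ S, v j = 0 := by
  simp [supportedKer, funext_iff]

lemma card_le_finrank_supportedKer_add [Fintype ι] [Module.Finite ℤ Q] [Module.Free ℤ Q] :
    #S ≤ finrank ℤ (supportedKer ψ S) + finrank ℤ Q := by
  classical
  set Φ := ψ.prod (LinearMap.funLeft ℤ ℤ ((↑) : {j // j ∉ S} → ι))
  have hrn : finrank ℤ (LinearMap.range Φ) + finrank ℤ (LinearMap.ker Φ) = Fintype.card ι := by
    rw [← Φ.quotKerEquivRange.finrank_eq, Submodule.finrank_quotient_add_finrank,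
      finrank_fintype_fun_eq_card]
  have hrange : finrank ℤ (LinearMap.range Φ) ≤ finrank ℤ Q + (Fintype.card ι - #S) := by
    refine (Submodule.finrank_le _).trans_eq ?_
    rw [finrank_prod, finrank_fintype_fun_eq_card, Fintype.card_subtype_compl, Fintype.card_coe]
  have hS : #S ≤ Fintype.card ι := card_le_univ S
  change _ ≤ finrank ℤ (LinearMap.ker Φ) + _
  omega

lemma exists_eq_smul_of_forall_dvd [IsTorsionFree ℤ Q] {p : ℤ} (hp : p ≠ 0)
    (hv : v ∈ supportedKer ψ S) (hdvd : ∀ j, p ∣ v j) : ∃ u ∈ supportedKer ψ S, v = p • u := by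
  have hvu : v = p • fun j => v j / p := funext fun j => (Int.mul_ediv_cancel' (hdvd j)).symm
  refine ⟨_, mem_supportedKer.2 ⟨?_, fun j hj => ?_⟩, hvu⟩
  · have hψ := (mem_supportedKer.1 hv).1
    rw [hvu, map_smul] at hψ
    exact (smul_eq_zero.1 hψ).resolve_left hp
  · simp [(mem_supportedKer.1 hv).2 j hj]

end SupportedKernel

section FlatUnion

variable {ι : Type*} {L : Submodule ℤ (ι → ℤ)} {S : Finset ι} {w : ι → ℤ}

open Classical in
noncomputable def flatUnion (L : Submodule ℤ (ι → ℤ)) (S : Finset ι) (w : ι → ℤ) : Finset ι :=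
  {j ∈ S | ∃ F, IsFlat L S w F ∧ j ∈ F}

lemma mem_flatUnion {j : ι} : j ∈ flatUnion L S w ↔ j ∈ S ∧ ∃ F, IsFlat L S w F ∧ j ∈ F := by
  classical
  simp [flatUnion]

lemma flatUnion_subset : flatUnion L S w ⊆ S := fun _ hj => (mem_flatUnion.1 hj).1

lemma nonpos_of_eq_zero_on_flatUnion (hw : ∀ i ∈ S, 0 < w i) {u : ι → ℤ} (hu : u ∈ L)
    (hT : ∀ j ∈ flatUnion L S w, u j = 0) {i : ι} (hi : i ∈ S) : u i ≤ 0 := by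
  obtain ⟨F, hF, hFmax⟩ := exists_isFlat_subset_maximizers (S := S) (w := w) hu
  obtain ⟨j, hjF⟩ := hF.nonempty ⟨i, hi⟩
  have hj0 : u j = 0 := hT j (mem_flatUnion.2 ⟨hF.subset hjF, F, hF, hjF⟩)
  have hle : ratio w u i ≤ 0 := by
    simpa [ratio, hj0] using (mem_maximizers.1 (hFmax hjF)).2 i hi
  have hwi : (0 : ℚ) < w i := by exact_mod_cast hw i hi
  have hui : (u i : ℚ) ≤ 0 := by simpa using (div_le_iff₀ hwi).1 hle
  exact_mod_cast hui

lemma eq_zero_of_eq_zero_on_flatUnion (hw : ∀ i ∈ S, 0 < w i) (hL : ∀ v ∈ L, ∀ j ∉ S, v j = 0)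
    {u : ι → ℤ} (hu : u ∈ L) (hT : ∀ j ∈ flatUnion L S w, u j = 0) : u = 0 := by
  funext i
  by_cases hi : i ∈ S
  · have hneg := nonpos_of_eq_zero_on_flatUnion hw (L.neg_mem hu) (by simpa using hT) hi
    have hpos := nonpos_of_eq_zero_on_flatUnion hw hu hT hi
    simp only [Pi.neg_apply, Left.neg_nonpos_iff] at hneg
    exact le_antisymm hpos hneg
  · exact hL u hu i hi

lemma finrank_le_card_flatUnion [Fintype ι] (hw : ∀ i ∈ S, 0 < w i)
    (hL : ∀ v ∈ L, ∀ j ∉ S, v j = 0) : finrank ℤ L ≤ #(flatUnion L S w) := by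
  let restrict : L →ₗ[ℤ] (flatUnion L S w → ℤ) :=
    LinearMap.funLeft ℤ ℤ ((↑) : flatUnion L S w → ι) ∘ₗ L.subtype
  have hinj : Function.Injective restrict := by
    rw [← LinearMap.ker_eq_bot, Submodule.eq_bot_iff]
    intro u hu
    refine Subtype.ext (eq_zero_of_eq_zero_on_flatUnion hw hL u.2 fun j hj => ?_)
    exact congrFun hu ⟨j, hj⟩
  simpa using LinearMap.finrank_le_finrank_of_injective hinj

end FlatUnion

section FlatSpan

variable {ι Q : Type*} [AddCommGroup Q] {ψ : (ι → ℤ) →ₗ[ℤ] Q} {L : Submodule ℤ (ι → ℤ)}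
  {S F : Finset ι} {w c u : ι → ℤ} {i j : ι}

noncomputable def flatSpan (L : Submodule ℤ (ι → ℤ)) (S : Finset ι) (w : ι → ℤ) :
    Submodule ℤ (ι → ℤ) :=
  ⨆ (F : Finset ι) (_ : IsFlat L S w F), L ⊓ Submodule.pi (F : Set ι) fun _ => ⊥

lemma mem_flatSpan_of_isFlat (hF : IsFlat L S w F) (hu : u ∈ L) (hF0 : ∀ i ∈ F, u i = 0) :
    u ∈ flatSpan L S w :=
  (le_iSup₂ (f := fun F (_ : IsFlat L S w F) => L ⊓ Submodule.pi (F : Set ι) fun _ => ⊥) F hF)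
    ⟨hu, by simpa [Submodule.mem_pi] using hF0⟩

lemma IsFlat.eq_zero_of_eq_zero (hF : IsFlat L S w F) (hw : ∀ i ∈ S, 0 < w i) (hu : u ∈ L)
    (hj : j ∈ F) (huj : u j = 0) (hi : i ∈ F) : u i = 0 := by
  have h := hF.2 u hu i hi j hj
  simp only [ratio, huj, Int.cast_zero, zero_div, div_eq_zero_iff, Int.cast_eq_zero] at h
  exact h.resolve_right (hw i (hF.subset hi)).ne'

lemma ratio_le_ratio_iff (hi : 0 < w i) (hj : 0 < w j) :
    ratio w c i ≤ ratio w c j ↔ c i * w j ≤ c j * w i := by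
  rw [ratio, ratio, div_le_div_iff₀ (by exact_mod_cast hi) (by exact_mod_cast hj)]
  exact_mod_cast Iff.rfl

lemma smul_sub_smul_nonneg (hw : ∀ i ∈ S, 0 < w i) (hw0 : ∀ i ∉ S, w i = 0)
    (hc0 : ∀ i ∉ S, c i = 0) (hj : j ∈ maximizers S (ratio w c)) : 0 ≤ c j • w - w j • c := by
  intro i
  have hjS := maximizers_subset hj
  by_cases hi : i ∈ S
  · have := (ratio_le_ratio_iff (hw i hi) (hw j hjS)).1 ((mem_maximizers.1 hj).2 i hi)
    simp only [Pi.zero_apply, Pi.sub_apply, Pi.smul_apply, smul_eq_mul]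
    linarith
  · simp [hw0 i hi, hc0 i hi]

lemma support_smul_sub_smul [Fintype ι] [DecidableEq ι] (hw : ∀ i ∈ S, 0 < w i)
    (hw0 : ∀ i ∉ S, w i = 0) (hc0 : ∀ i ∉ S, c i = 0) (hj : j ∈ maximizers S (ratio w c)) :
    ({i | (c j • w - w j • c) i ≠ 0} : Finset ι) = S \ maximizers S (ratio w c) := by
  ext i
  have hjS := maximizers_subset hj
  simp only [mem_filter, mem_univ, true_and, Pi.sub_apply, Pi.smul_apply, smul_eq_mul]
  rw [Finset.mem_sdiff]
  by_cases hi : i ∈ S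
  · have hle := (ratio_le_ratio_iff (hw i hi) (hw j hjS)).1 ((mem_maximizers.1 hj).2 i hi)
    rw [mem_maximizers_iff_le hj hi, ratio_le_ratio_iff (hw j hjS) (hw i hi)]
    constructor
    · intro h
      exact ⟨hi, fun h' => h (by linarith)⟩
    · rintro ⟨-, h⟩ h'
      exact h (by linarith)
  · simp [hi, hw0 i hi, hc0 i hi]

lemma flatSpan_supportedKer_le [Fintype ι] [DecidableEq ι] {G : Submodule ℤ (ι → ℤ)}
    (hw : ∀ i ∈ S, 0 < w i) (hwS : w ∈ supportedKer ψ S) (hS : S.Nonempty)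
    (hsmaller : ∀ y : ι → ℤ, 0 ≤ y → ψ y = 0 → #{i | y i ≠ 0} < #S →
      supportedKer ψ {i | y i ≠ 0} ≤ G) :
    flatSpan (supportedKer ψ S) S w ≤ G := by
  refine iSup₂_le fun F hF => ?_
  obtain ⟨⟨c, hc, rfl⟩, -⟩ := hF
  obtain ⟨j, hj⟩ := maximizers_nonempty (f := ratio w c) hS
  have hw0 := (mem_supportedKer.1 hwS).2
  have hc0 := (mem_supportedKer.1 hc).2
  have hsupp := support_smul_sub_smul hw hw0 hc0 hj
  have hψy : ψ (c j • w - w j • c) = 0 := by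
    rw [map_sub, map_smul, map_smul, (mem_supportedKer.1 hwS).1, (mem_supportedKer.1 hc).1,
      smul_zero, smul_zero, sub_zero]
  rintro u ⟨hu, huF⟩
  simp only [SetLike.mem_coe, Submodule.mem_pi, Submodule.mem_bot] at huF
  refine hsmaller _ (smul_sub_smul_nonneg hw hw0 hc0 hj) hψy ?_ ?_
  · rw [hsupp]
    exact card_lt_card (sdiff_ssubset maximizers_subset ⟨j, hj⟩)
  · rw [hsupp, mem_supportedKer]
    refine ⟨(mem_supportedKer.1 hu).1, fun i hi => ?_⟩
    by_cases hiS : i ∈ S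
    · exact huF i (by simpa [hiS] using hi)
    · exact (mem_supportedKer.1 hu).2 i hiS

end FlatSpan

lemma exists_nonneg_add_smul {ι : Type*} [Fintype ι] {b v : ι → ℤ} (hb : 0 ≤ b)
    (hvb : ∀ i, b i = 0 → v i = 0) : ∃ N : ℕ, 0 ≤ v + N • b := by
  let N := univ.sup fun i => (v i).natAbs
  refine ⟨N, fun i => ?_⟩
  have hN : (v i).natAbs ≤ N := le_sup (f := fun i => (v i).natAbs) (mem_univ i)
  rcases (hb i).eq_or_lt with hbi | hbi
  · simp [hvb i hbi.symm, ← hbi]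
  · change 0 ≤ v i + N • b i
    rw [nsmul_eq_mul]
    have hbi' : 0 < b i := hbi
    have hNi : ((v i).natAbs : ℤ) ≤ N := by exact_mod_cast hN
    have hvi : -(v i) ≤ (v i).natAbs := by omega
    nlinarith

section Closure

variable {ι Q : Type*} [Fintype ι] [AddCommGroup Q] {ψ : (ι → ℤ) →ₗ[ℤ] Q}
  {S : Finset ι} {w : ι → ℤ}

lemma eq_zero_of_comap_flatSpan_le_ker [DecidableEq ι] [IsTorsionFree ℤ Q] (hw : ∀ i ∈ S, 0 < w i)
    {p : ℕ} [Fact p.Prime] (θ : supportedKer ψ S →ₗ[ℤ] ZMod p)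
    (hθ : (flatSpan (supportedKer ψ S) S w).comap (supportedKer ψ S).subtype ≤ LinearMap.ker θ)
    (hcard : 1 + #(S \ flatUnion (supportedKer ψ S) S w) < finrank ℤ (supportedKer ψ S)) :
    θ = 0 := by
  set T := flatUnion (supportedKer ψ S) S w
  by_contra hθ0
  have hdvdT : ∀ v : supportedKer ψ S, θ v = 0 → ∀ j ∈ T, (p : ℤ) ∣ (v : ι → ℤ) j := by
    intro v hv j hj
    obtain ⟨-, F, hF, hjF⟩ := mem_flatUnion.1 hj
    refine dvd_of_ker_le_ker (LinearMap.proj j ∘ₗ (supportedKer ψ S).subtype) θ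
      (fun u hu => hθ ?_) hθ0 hv
    exact mem_flatSpan_of_isFlat hF u.2 fun i hi => hF.eq_zero_of_eq_zero hw u.2 hjF hu hi
  let reduce : (ι → ℤ) →ₗ[ℤ] ι → ZMod p :=
    LinearMap.pi fun j => (Int.castAddHom (ZMod p)).toIntLinearMap ∘ₗ LinearMap.proj j
  let Φ : supportedKer ψ S →ₗ[ℤ] Option (S \ T : Finset ι) → ZMod p := LinearMap.pi fun o =>
    o.elim θ fun j => LinearMap.proj (j : ι) ∘ₗ reduce ∘ₗ (supportedKer ψ S).subtype
  obtain ⟨v, hΦv, hv⟩ := exists_map_eq_zero_forall_ne_smul p Φ <| by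
    rw [Fintype.card_option, Fintype.card_coe]
    omega
  have hdvd : ∀ j, (p : ℤ) ∣ (v : ι → ℤ) j := by
    intro j
    by_cases hjS : j ∈ S
    · by_cases hjT : j ∈ T
      · exact hdvdT v (congrFun hΦv none) j hjT
      · have := congrFun hΦv (some ⟨j, mem_sdiff.2 ⟨hjS, hjT⟩⟩)
        exact (ZMod.intCast_zmod_eq_zero_iff_dvd _ _).1 (by simpa [Φ, reduce] using this)
    · simp [(mem_supportedKer.1 v.2).2 j hjS]
  have hp : (p : ℤ) ≠ 0 := by exact_mod_cast (Fact.out : p.Prime).ne_zero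
  obtain ⟨u, hu, huv⟩ := exists_eq_smul_of_forall_dvd hp v.2 hdvd
  exact hv ⟨u, hu⟩ (Subtype.ext huv)

lemma supportedKer_le_flatSpan [DecidableEq ι] [Module.Finite ℤ Q] [IsTorsionFree ℤ Q]
    (hw : ∀ i ∈ S, 0 < w i) (hS : 2 * finrank ℤ Q + 2 ≤ #S) :
    supportedKer ψ S ≤ flatSpan (supportedKer ψ S) S w := by
  have hL : ∀ v ∈ supportedKer ψ S, ∀ j ∉ S, v j = 0 := fun v hv => (mem_supportedKer.1 hv).2
  have hrank := card_le_finrank_supportedKer_add (ψ := ψ) (S := S)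
  have hT := finrank_le_card_flatUnion hw hL
  have hsdiff := card_sdiff_of_subset (flatUnion_subset (L := supportedKer ψ S) (S := S) (w := w))
  have hTS := card_le_card (flatUnion_subset (L := supportedKer ψ S) (S := S) (w := w))
  have htop := eq_top_of_forall_zmod
    ((flatSpan (supportedKer ψ S) S w).comap (supportedKer ψ S).subtype)
    fun p hp θ hθ =>
      have : Fact p.Prime := ⟨hp⟩
      eq_zero_of_comap_flatSpan_le_ker hw θ hθ (by omega)
  intro v hv
  simpa using htop.ge (Submodule.mem_top (x := ⟨v, hv⟩))

def smallSupportKer (ψ : (ι → ℤ) →ₗ[ℤ] Q) (k : ℕ) : Set (ι → ℤ) :=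
  {u | 0 ≤ u ∧ ψ u = 0 ∧ #{i | u i ≠ 0} ≤ k}

lemma supportedKer_le_closure_of_card_le {b : ι → ℤ} {k : ℕ} (hb : 0 ≤ b) (hψb : ψ b = 0)
    (hk : #{i | b i ≠ 0} ≤ k) :
    supportedKer ψ {i | b i ≠ 0} ≤ (AddSubgroup.closure (smallSupportKer ψ k)).toIntSubmodule := by
  intro v hv
  obtain ⟨hψv, hvb⟩ := mem_supportedKer.1 hv
  have hvb' : ∀ i, b i = 0 → v i = 0 := fun i hi => hvb i (by simpa using hi)
  obtain ⟨N, hN⟩ := exists_nonneg_add_smul hb hvb'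
  have hsupp : #{i | (v + N • b) i ≠ 0} ≤ k := (card_le_card fun i => by
    simp only [mem_filter, mem_univ, true_and, Pi.add_apply, Pi.smul_apply]
    intro h hbi
    simp [hbi, hvb' i hbi] at h).trans hk
  have hu : v + N • b ∈ smallSupportKer ψ k :=
    ⟨hN, by rw [map_add, map_nsmul, hψv, hψb, nsmul_zero, add_zero], hsupp⟩
  have hb' : b ∈ smallSupportKer ψ k := ⟨hb, hψb, hk⟩
  have hv_eq : v = (v + N • b) - N • b := by abel
  change v ∈ AddSubgroup.closure _
  rw [hv_eq]
  exact sub_mem (AddSubgroup.subset_closure hu) (nsmul_mem (AddSubgroup.subset_closure hb') N)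

theorem supportedKer_le_closure_smallSupportKer [DecidableEq ι] [Module.Finite ℤ Q]
    [IsTorsionFree ℤ Q] {b : ι → ℤ} (hb : 0 ≤ b) (hψb : ψ b = 0) :
    supportedKer ψ {i | b i ≠ 0} ≤
      (AddSubgroup.closure (smallSupportKer ψ (1 + 2 * finrank ℤ Q))).toIntSubmodule := by
  induction hk : #{i | b i ≠ 0} using Nat.strong_induction_on generalizing b with
  | _ k ih =>
  by_cases hsmall : k ≤ 1 + 2 * finrank ℤ Q
  · exact supportedKer_le_closure_of_card_le hb hψb (hk ▸ hsmall)
  have hpos : ∀ i ∈ ({i | b i ≠ 0} : Finset ι), 0 < b i := fun i hi =>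
    (hb i).lt_of_ne' (by simpa using hi)
  have hbS : b ∈ supportedKer ψ {i | b i ≠ 0} := mem_supportedKer.2 ⟨hψb, by simp⟩
  have hne : ({i | b i ≠ 0} : Finset ι).Nonempty := card_pos.1 (by omega)
  refine (supportedKer_le_flatSpan hpos (by omega)).trans ?_
  exact flatSpan_supportedKer_le hpos hbS hne
    fun y hy hψy hyS => ih _ (hk ▸ hyS) hy hψy rfl

lemma image_smallSupport_eq_smallSupportKer {B : Set (ι → ℕ)} {Λ : AddSubgroup (ι → ℤ)}
    (hB : (fun m i => (m i : ℤ)) '' B = ↑Λ ∩ {v | ∀ i, 0 ≤ v i}) (k : ℕ) :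
    (fun m i => (m i : ℤ)) '' {m | m ∈ B ∧ #{i | m i ≠ 0} ≤ k} =
      smallSupportKer (QuotientAddGroup.mk' Λ).toIntLinearMap k := by
  ext u
  constructor
  · rintro ⟨m, ⟨hmB, hm⟩, rfl⟩
    obtain ⟨hΛ, h0⟩ := hB ▸ Set.mem_image_of_mem _ hmB
    exact ⟨h0, (QuotientAddGroup.eq_zero_iff _).2 hΛ, by simpa using hm⟩
  · rintro ⟨h0, hψ, hu⟩
    have hu' : u ∈ (fun m i => (m i : ℤ)) '' B := hB ▸ ⟨(QuotientAddGroup.eq_zero_iff _).1 hψ, h0⟩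
    obtain ⟨m, hmB, rfl⟩ := hu'
    exact ⟨m, ⟨hmB, by simpa using hu⟩, rfl⟩

end Closure

end SmallSupport

open SmallSupport in
theorem differenceClosed_torsionFree_subset_closure_small_support_general
    (n s : ℕ) (B : AddSubmonoid (Fin n → ℕ))
    (ι : (Fin n → ℕ) → (Fin n → ℤ)) (hι : ι = fun m i => (m i : ℤ))
    (ZB : AddSubgroup (Fin n → ℤ))
    (hdc : ι '' (B : Set (Fin n → ℕ)) = ↑ZB ∩ {v | ∀ i, 0 ≤ v i})
    (htf : ∀ x : (Fin n → ℤ) ⧸ ZB, ∀ k : ℤ, k ≠ 0 → k • x = 0 → x = 0)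
    (hs : s = Module.finrank ℤ ((Fin n → ℤ) ⧸ ZB)) :
    ∀ b ∈ B, ι b ∈ AddSubgroup.closure
      (ι '' {m : Fin n → ℕ | m ∈ B ∧
        (Finset.univ.filter (fun i => m i ≠ 0)).card ≤ 1 + 2 * s}) := by
  intro b hb
  subst hι hs
  have : Module.Finite ℤ ((Fin n → ℤ) ⧸ ZB) :=
    Module.Finite.of_surjective (QuotientAddGroup.mk' ZB).toIntLinearMap
      (QuotientAddGroup.mk'_surjective ZB)
  have : Module.IsTorsionFree ℤ ((Fin n → ℤ) ⧸ ZB) :=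
    .of_smul_eq_zero fun k x hx => or_iff_not_imp_left.2 fun hk => htf x k hk hx
  obtain ⟨hbZB, hb0⟩ := hdc ▸ Set.mem_image_of_mem _ hb
  have hψb : (QuotientAddGroup.mk' ZB).toIntLinearMap (fun i => (b i : ℤ)) = 0 :=
    (QuotientAddGroup.eq_zero_iff _).2 hbZB
  have hmem := supportedKer_le_closure_smallSupportKer hb0 hψb (mem_supportedKer.2 ⟨hψb, by simp⟩)
  rwa [← image_smallSupport_eq_smallSupportKer hdc] at hmem

/-- a difference-closed submonoid `B` of ℕⁿ with torsion-free quotient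
ℤⁿ/ℤB of rank `s` is contained in the subgroup generated by its elements of
support size at most `1 + 2s`. -/
theorem differenceClosed_torsionFree_subset_closure_small_support
    (n s : ℕ) (B : AddSubmonoid (Fin n → ℕ))
    (ι : (Fin n → ℕ) → (Fin n → ℤ)) (hι : ι = fun m i => (m i : ℤ))
    (ZB : AddSubgroup (Fin n → ℤ))
    (hZB : ZB = AddSubgroup.closure (ι '' (B : Set (Fin n → ℕ))))
    (hdc : ι '' (B : Set (Fin n → ℕ)) = ↑ZB ∩ {v | ∀ i, 0 ≤ v i})
    (htf : ∀ x : (Fin n → ℤ) ⧸ ZB, ∀ k : ℤ, k ≠ 0 → k • x = 0 → x = 0)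
    (hs : s = Module.finrank ℤ ((Fin n → ℤ) ⧸ ZB)) :
    ∀ b ∈ B, ι b ∈ AddSubgroup.closure
      (ι '' {m : Fin n → ℕ | m ∈ B ∧
        (Finset.univ.filter (fun i => m i ≠ 0)).card ≤ 1 + 2 * s}) :=
  differenceClosed_torsionFree_subset_closure_small_support_general n s B ι hι ZB hdc htf hs
end

section
/- Let A be a finite abelian group with minimal number of generators r. Then any finite family of cosets of subgroups of A, such that every subfamily of size at most 1 + r has nonempty intersection, itself has nonempty intersection. In other words, the Helly dimension of A is at most 1 + rk(A). -/
/-!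
Take cosets `g i • H i`, `i ∈ S`, with empty intersection whose proper subfamilies all meet.
The exponents `m` for which the cosets `g i ^ m • H i` still meet form a subgroup of `ℤ` that
misses `1`, so for some prime `p` it misses the `p'`-part `q` of `|A|`. The subfamilies without
`i` of the cosets `g j ^ q • H j` have common points `x i` of `p`-power order, and for a fixed
`i₀` the elements `x i / x i₀`, `i ≠ i₀`, lie in `H j` for `j ≠ i` but not in `H i`. Suitable
`p`-power powers of them become, modulo `⋂ H i`, elements of order `p` that are independent
over `𝔽_p`. Hence `p ^ (|S| - 1)` is at most the number of solutions of `b ^ p = 1` in a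
quotient `B` of `A`, which equals `|B / B ^ p| ≤ p ^ rk A`.
-/

open Pointwise

section

variable {B : Type*} [CommGroup B]

theorem Int.exists_prime_ordCompl_notMem {G : AddSubgroup ℤ} {n : ℕ} (hn : n ≠ 0)
    (h1 : (1 : ℤ) ∉ G) : ∃ p, p.Prime ∧ ((ordCompl[p] n : ℕ) : ℤ) ∉ G := by
  obtain ⟨a, rfl⟩ := Int.subgroup_cyclic G
  simp only [← AddSubgroup.zmultiples_eq_closure, Int.mem_zmultiples_iff] at h1 ⊢
  obtain ⟨p, hp, hpa⟩ := Nat.exists_prime_and_dvd fun h : a.natAbs = 1 =>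
    h1 (Int.natAbs_dvd_natAbs.mp (by simp [h]))
  exact ⟨p, hp, fun ha => Nat.not_dvd_ordCompl hp hn (hpa.trans (Int.natAbs_dvd_natAbs.mpr ha))⟩

theorem exists_pow_prime_pow_notMem {G : Type*} [Group G] {H : Subgroup G} {y : G} {p n : ℕ}
    (hn : y ^ p ^ n ∈ H) (hy : y ∉ H) : ∃ s, y ^ p ^ s ∉ H ∧ (y ^ p ^ s) ^ p ∈ H := by
  induction n with
  | zero => simp_all
  | succ n ih =>
    by_cases h : y ^ p ^ n ∈ H
    · exact ih h
    · exact ⟨n, h, by rwa [← pow_mul, ← pow_succ]⟩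

theorem Subgroup.closure_image_eq_top {G N : Type*} [Group G] [Group N] [DecidableEq N]
    {f : G →* N} (hf : Function.Surjective f) {S : Finset G}
    (hS : Subgroup.closure (S : Set G) = ⊤) :
    Subgroup.closure ((S.image f : Finset N) : Set N) = ⊤ := by
  rw [Finset.coe_image, ← MonoidHom.map_closure, hS, ← MonoidHom.range_eq_map,
    MonoidHom.range_eq_top.mpr hf]

theorem MonoidHom.card_ker_eq_index_range {G : Type*} [Group G] [Finite G] (f : G →* G) :
    Nat.card f.ker = f.range.index := by
  have h := f.range.card_mul_index
  rw [← f.ker.card_mul_index, Subgroup.index_ker, mul_comm] at h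
  exact (Nat.eq_of_mul_eq_mul_right Nat.card_pos h).symm

theorem card_le_pow_card_of_pow_eq_one {n : ℕ} (hn : 0 < n) (hB : ∀ b : B, b ^ n = 1)
    {S : Finset B} (hS : Subgroup.closure (S : Set B) = ⊤) : Nat.card B ≤ n ^ S.card := by
  have hsurj : Function.Surjective fun e : S → Fin n => ∏ s : S, (s : B) ^ (e s : ℕ) := by
    intro b
    have hb : b ∈ Submonoid.closure (S : Set B) := by
      rw [← Subgroup.closure_toSubmonoid_of_isOfFinOrder fun x _ =>
        isOfFinOrder_iff_pow_eq_one.mpr ⟨n, hn, hB x⟩, hS]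
      trivial
    obtain ⟨f, -, rfl⟩ := Submonoid.mem_closure_finset.mp hb
    refine ⟨fun s => ⟨f s % n, Nat.mod_lt _ hn⟩, ?_⟩
    rw [← Finset.prod_attach]
    exact Finset.prod_congr rfl fun s _ => (pow_eq_pow_mod _ (hB s)).symm
  simpa [Nat.card_fun] using Nat.card_le_card_of_surjective _ hsurj

theorem injective_prod_pow_of_independent {ι : Type*} [Fintype ι] {p : ℕ} [Fact p.Prime]
    {w : ι → B} {L : ι → Subgroup B} (hw : ∀ i, w i ^ p = 1)
    (hin : ∀ i j, i ≠ j → w i ∈ L j) (hout : ∀ i, w i ∉ L i) :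
    Function.Injective fun c : ι → ZMod p => ∏ i, w i ^ (c i).val := by
  intro c d hcd
  funext i
  let π := QuotientGroup.mk' (L i)
  have hπ (e : ι → ZMod p) : π (∏ j, w j ^ (e j).val) = π (w i) ^ (e i).val := by
    rw [map_prod, Fintype.prod_eq_single i fun j hj => ?_, map_pow]
    rw [QuotientGroup.mk'_apply, QuotientGroup.eq_one_iff]
    exact pow_mem (hin j i hj) _
  have horder : orderOf (π (w i)) = p :=
    orderOf_eq_prime (by rw [← map_pow, hw, map_one]) (by simpa [π] using hout i)
  have h := congrArg π hcd
  simp only [hπ] at h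
  rw [pow_eq_pow_iff_modEq, horder, ← ZMod.natCast_eq_natCast_iff] at h
  simpa using h

theorem card_le_card_of_independent [Finite B] {ι : Type*} [Fintype ι] {p : ℕ} (hp : p.Prime)
    {w : ι → B} {L : ι → Subgroup B} (hw : ∀ i, w i ^ p = 1)
    (hin : ∀ i j, i ≠ j → w i ∈ L j) (hout : ∀ i, w i ∉ L i)
    {S : Finset B} (hS : Subgroup.closure (S : Set B) = ⊤) : Fintype.card ι ≤ S.card := by
  classical
  have := Fact.mk hp
  let f : B →* B := powMonoidHom p
  have hker : p ^ Fintype.card ι ≤ Nat.card f.ker := by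
    let Φ (c : ι → ZMod p) : f.ker := ⟨∏ i, w i ^ (c i).val, by
      rw [MonoidHom.mem_ker, powMonoidHom_apply, ← Finset.prod_pow]
      exact Finset.prod_eq_one fun i _ => by rw [pow_right_comm, hw, one_pow]⟩
    have hΦ : Function.Injective Φ := fun c d h =>
      injective_prod_pow_of_independent hw hin hout (congrArg Subtype.val h)
    simpa [Nat.card_fun] using Nat.card_le_card_of_injective Φ hΦ
  have hcoker : f.range.index ≤ p ^ S.card := by
    let π := QuotientGroup.mk' f.range
    have hexp (c : B ⧸ f.range) : c ^ p = 1 := by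
      induction c using QuotientGroup.induction_on with
      | H b => exact (QuotientGroup.eq_one_iff _).mpr ⟨b, rfl⟩
    calc f.range.index ≤ p ^ (S.image π).card := card_le_pow_card_of_pow_eq_one hp.pos hexp
          (Subgroup.closure_image_eq_top (QuotientGroup.mk'_surjective _) hS)
      _ ≤ p ^ S.card := Nat.pow_le_pow_right hp.pos Finset.card_image_le
  rw [← Nat.pow_le_pow_iff_right hp.one_lt]
  exact hker.trans (f.card_ker_eq_index_range ▸ hcoker)

end

section

variable {A : Type*} [CommGroup A] {ι : Type*}

theorem card_le_card_of_independent_of_pow_prime_pow_eq_one [Finite A] {p n : ℕ}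
    (hp : p.Prime) {T : Finset ι} {y : ι → A} {H : ι → Subgroup A}
    (hy : ∀ i ∈ T, y i ^ p ^ n = 1) (hin : ∀ i ∈ T, ∀ j ∈ T, i ≠ j → y i ∈ H j)
    (hout : ∀ i ∈ T, y i ∉ H i) {S : Finset A} (hS : Subgroup.closure (S : Set A) = ⊤) :
    T.card ≤ S.card := by
  classical
  have hz (i : T) : ∃ s, y i ^ p ^ s ∉ H i ∧ (y i ^ p ^ s) ^ p ∈ H i :=
    exists_pow_prime_pow_notMem (by rw [hy i i.2]; exact one_mem _) (hout i i.2)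
  choose s hzout hzp using hz
  have hzin (i j : T) (hij : i ≠ j) (m : ℕ) : y i ^ m ∈ H j :=
    pow_mem (hin i i.2 j j.2 (Subtype.coe_ne_coe.mpr hij)) m
  let K := ⨅ i : T, H i
  let π := QuotientGroup.mk' K
  have hzK (i : T) : (y i ^ p ^ s i) ^ p ∈ K := Subgroup.mem_iInf.mpr fun j => by
    by_cases hij : i = j
    · exact hij ▸ hzp i
    · rw [← pow_mul]; exact hzin i j hij _
  have hwout (i : T) : π (y i ^ p ^ s i) ∉ (H i).map π := fun h => hzout i <| by
    have h' : y i ^ p ^ s i ∈ ((H i).map π).comap π := h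
    rwa [Subgroup.comap_map_eq, QuotientGroup.ker_mk',
      sup_eq_left.mpr (iInf_le (fun j : T => H j) i)] at h'
  have hind := card_le_card_of_independent hp (w := fun i : T => π (y i ^ p ^ s i))
    (L := fun i => (H i).map π)
    (fun i => by rw [← map_pow]; exact (QuotientGroup.eq_one_iff _).mpr (hzK i))
    (fun i j hij => Subgroup.mem_map_of_mem π (hzin i j hij _)) hwout
    (Subgroup.closure_image_eq_top (QuotientGroup.mk'_surjective K) hS)
  simpa using hind.trans Finset.card_image_le

theorem mem_biInter_leftCoset_iff {S : Finset ι} {a : ι → A} {H : ι → Subgroup A} {x : A} :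
    x ∈ ⋂ i ∈ S, a i • (H i : Set A) ↔ ∀ i ∈ S, (x : A ⧸ H i) = a i := by
  simp [← QuotientGroup.eq_class_eq_leftCoset]

theorem zpow_mem_biInter_leftCoset {S : Finset ι} {a : ι → A} {H : ι → Subgroup A} {x : A}
    (hx : x ∈ ⋂ i ∈ S, a i • (H i : Set A)) (m : ℤ) :
    x ^ m ∈ ⋂ i ∈ S, a i ^ m • (H i : Set A) := by
  rw [mem_biInter_leftCoset_iff] at hx ⊢
  simp +contextual [hx]

theorem div_mem_of_mem_leftCoset {H : Subgroup A} {a u v : A} (hu : u ∈ a • (H : Set A))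
    (hv : v ∈ a • (H : Set A)) : u / v ∈ H := by
  rw [mem_leftCoset_iff] at hu hv
  simpa [mul_div_mul_left_eq_div] using div_mem hu hv

theorem mem_leftCoset_of_div_mem {H : Subgroup A} {a u v : A} (huv : u / v ∈ H)
    (hv : v ∈ a • (H : Set A)) : u ∈ a • (H : Set A) := by
  rw [mem_leftCoset_iff] at hv ⊢
  simpa [mul_assoc, mul_div_cancel] using mul_mem hv huv

def exponentsWithCommonPoint (S : Finset ι) (g : ι → A) (H : ι → Subgroup A) :
    AddSubgroup ℤ where
  carrier := {m | (⋂ i ∈ S, g i ^ m • (H i : Set A)).Nonempty}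
  zero_mem' := ⟨1, by simp⟩
  add_mem' := by
    rintro m n ⟨x, hx⟩ ⟨y, hy⟩
    rw [mem_biInter_leftCoset_iff] at hx hy
    refine ⟨x * y, mem_biInter_leftCoset_iff.2 fun i hi => ?_⟩
    simp [hx i hi, hy i hi, zpow_add]
  neg_mem' := by
    rintro m ⟨x, hx⟩
    exact ⟨x⁻¹, by simpa using zpow_mem_biInter_leftCoset hx (-1)⟩

theorem mem_exponentsWithCommonPoint {S : Finset ι} {g : ι → A} {H : ι → Subgroup A}
    {m : ℤ} :
    m ∈ exponentsWithCommonPoint S g H ↔ (⋂ i ∈ S, g i ^ m • (H i : Set A)).Nonempty :=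
  Iff.rfl

theorem nonempty_biInter_of_nonempty_biInter_erase [Finite A] [DecidableEq ι] {S₀ : Finset A}
    (hS₀ : Subgroup.closure (S₀ : Set A) = ⊤) {S : Finset ι} (hS : S₀.card + 2 ≤ S.card)
    {g : ι → A} {H : ι → Subgroup A}
    (h : ∀ i ∈ S, (⋂ j ∈ S.erase i, g j • (H j : Set A)).Nonempty) :
    (⋂ i ∈ S, g i • (H i : Set A)).Nonempty := by
  by_contra hempty
  obtain ⟨p, hp, hq⟩ := Int.exists_prime_ordCompl_notMem (Nat.card_pos (α := A)).ne'
    (G := exponentsWithCommonPoint S g H) (by simpa [mem_exponentsWithCommonPoint] using hempty)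
  set q := ordCompl[p] (Nat.card A)
  have hx (i : ι) (hi : i ∈ S) : ∃ x : A, x ^ ordProj[p] (Nat.card A) = 1 ∧
      x ∈ ⋂ j ∈ S.erase i, g j ^ (q : ℤ) • (H j : Set A) := by
    obtain ⟨x, hx⟩ := h i hi
    refine ⟨x ^ (q : ℤ), ?_, zpow_mem_biInter_leftCoset hx q⟩
    rw [zpow_natCast, ← pow_mul, mul_comm, Nat.ordProj_mul_ordCompl_eq_self, pow_card_eq_one']
  choose! x hxp hxS using hx
  have hxc (i j : ι) (hi : i ∈ S) (hj : j ∈ S) (hji : j ≠ i) :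
      x i ∈ g j ^ (q : ℤ) • (H j : Set A) :=
    Set.mem_iInter₂.mp (hxS i hi) j (Finset.mem_erase.mpr ⟨hji, hj⟩)
  obtain ⟨i₀, hi₀⟩ := Finset.card_pos.mp (by omega : 0 < S.card)
  set T := S.erase i₀
  have hy (i : ι) (hi : i ∈ T) : (x i / x i₀) ^ ordProj[p] (Nat.card A) = 1 := by
    rw [div_pow, hxp i (Finset.mem_of_mem_erase hi), hxp i₀ hi₀, div_one]
  have hin (i : ι) (hi : i ∈ T) (j : ι) (hj : j ∈ T) (hij : i ≠ j) : x i / x i₀ ∈ H j :=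
    div_mem_of_mem_leftCoset (hxc i j (Finset.mem_of_mem_erase hi) (Finset.mem_of_mem_erase hj)
      hij.symm) (hxc i₀ j hi₀ (Finset.mem_of_mem_erase hj) (Finset.ne_of_mem_erase hj))
  have hout (i : ι) (hi : i ∈ T) : x i / x i₀ ∉ H i := fun hyi =>
    hq <| mem_exponentsWithCommonPoint.mpr ⟨x i, Set.mem_iInter₂.mpr fun j hj => by
      by_cases hji : j = i
      · subst hji
        exact mem_leftCoset_of_div_mem hyi
          (hxc i₀ j hi₀ (Finset.mem_of_mem_erase hi) (Finset.ne_of_mem_erase hi))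
      · exact hxc i j (Finset.mem_of_mem_erase hi) hj hji⟩
  have hT := card_le_card_of_independent_of_pow_prime_pow_eq_one hp hy hin hout hS₀
  rw [Finset.card_erase_of_mem hi₀] at hT
  omega

theorem nonempty_biInter_of_forall_card_le [Finite A] [DecidableEq ι] {S₀ : Finset A}
    (hS₀ : Subgroup.closure (S₀ : Set A) = ⊤) {g : ι → A} {H : ι → Subgroup A}
    (hsmall : ∀ S : Finset ι, S.card ≤ 1 + S₀.card →
      (⋂ i ∈ S, g i • (H i : Set A)).Nonempty)
    (S : Finset ι) : (⋂ i ∈ S, g i • (H i : Set A)).Nonempty := by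
  induction S using Finset.strongInduction with
  | H S ih =>
    by_cases hS : S.card ≤ 1 + S₀.card
    · exact hsmall S hS
    · exact nonempty_biInter_of_nonempty_biInter_erase hS₀ (by omega)
        fun i hi => ih _ (Finset.erase_ssubset hi)

end

/-- Helly dimension of a finite abelian group `A` is at most `1 + rk(A)`:
if every subfamily of at most `1 + r` cosets has nonempty intersection, where `r`
is the minimal number of generators of `A`, then the whole family has nonempty
intersection. -/
theorem helly_finite_abelian (A : Type*) [CommGroup A] [Fintype A] (r : ℕ)
    (hr : r = sInf {k | ∃ S : Finset A, S.card = k ∧ Subgroup.closure (S : Set A) = ⊤})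
    (t : ℕ) (g : Fin t → A) (H : Fin t → Subgroup A)
    (hsmall : ∀ S : Finset (Fin t), S.card ≤ 1 + r →
      (⋂ i ∈ S, g i • (H i : Set A)).Nonempty) :
    (⋂ i, g i • (H i : Set A)).Nonempty := by
  have hgen : {k | ∃ S : Finset A, S.card = k ∧ Subgroup.closure (S : Set A) = ⊤}.Nonempty :=
    ⟨_, Finset.univ, rfl, by simp⟩
  obtain ⟨S₀, hcard, hS₀⟩ := hr ▸ Nat.sInf_mem hgen
  simpa using nonempty_biInter_of_forall_card_le hS₀ (hcard ▸ hsmall) Finset.univ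
end

section
/- Let K be an algebraically closed field. Any finite family of cosets of Zariski-closed (equivalently, finite or full) subgroups of the multiplicative group K^× such that every pair of cosets in the family has nonempty intersection, has nonempty common intersection. Equivalently, the Helly dimension of K^× equals 2. -/
open Pointwise Polynomial

/-! Auxiliary machinery: the subgroups `U K n = {x : Kˣ | x ^ n = 1}` of roots of
unity, their lattice structure, and classification of finite subgroups of `Kˣ`. -/

private lemma nat_distrib {a b c : ℕ} (ha : a ≠ 0) (hb : b ≠ 0) (hc : c ≠ 0) :
    Nat.gcd (Nat.lcm c a) (Nat.lcm c b) ∣ Nat.lcm c (Nat.gcd a b) := by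
  have h1 : Nat.lcm c a ≠ 0 := Nat.lcm_ne_zero hc ha
  have h2 : Nat.lcm c b ≠ 0 := Nat.lcm_ne_zero hc hb
  have hg : Nat.gcd a b ≠ 0 := Nat.gcd_ne_zero_left ha
  have h3 : Nat.gcd (Nat.lcm c a) (Nat.lcm c b) ≠ 0 := Nat.gcd_ne_zero_left h1
  have h4 : Nat.lcm c (Nat.gcd a b) ≠ 0 := Nat.lcm_ne_zero hc hg
  rw [← Nat.factorization_le_iff_dvd h3 h4, Nat.factorization_gcd h1 h2,
    Nat.factorization_lcm hc ha, Nat.factorization_lcm hc hb,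
    Nat.factorization_lcm hc hg, Nat.factorization_gcd ha hb]
  intro p
  simp only [Finsupp.inf_apply, Finsupp.sup_apply]
  omega

private def U (K : Type*) [Field K] (n : ℕ) : Subgroup Kˣ where
  carrier := {x | x ^ n = 1}
  mul_mem' := by
    intro a b ha hb
    simp only [Set.mem_setOf_eq] at *
    rw [mul_pow, ha, hb, one_mul]
  one_mem' := by simp
  inv_mem' := by
    intro a ha
    simp only [Set.mem_setOf_eq] at *
    rw [inv_pow, ha, inv_one]

private lemma mem_U {K : Type*} [Field K] {n : ℕ} {x : Kˣ} : x ∈ U K n ↔ x ^ n = 1 :=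
  Iff.rfl

private lemma U_mono {K : Type*} [Field K] {m n : ℕ} (h : m ∣ n) : U K m ≤ U K n := by
  intro x hx
  obtain ⟨k, rfl⟩ := h
  rw [mem_U, pow_mul, mem_U.mp hx, one_pow]

private lemma mem_U_gcd {K : Type*} [Field K] {m n : ℕ} {x : Kˣ}
    (hm : x ∈ U K m) (hn : x ∈ U K n) : x ∈ U K (Nat.gcd m n) := by
  rw [mem_U, ← orderOf_dvd_iff_pow_eq_one]
  exact Nat.dvd_gcd (orderOf_dvd_of_pow_eq_one (mem_U.mp hm))
    (orderOf_dvd_of_pow_eq_one (mem_U.mp hn))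

private lemma U_lcm_le_sup {K : Type*} [Field K] {m n : ℕ} (hm : m ≠ 0) :
    U K (Nat.lcm m n) ≤ U K m ⊔ U K n := by
  intro x hx
  have hgpos : 0 < Nat.gcd m n := Nat.gcd_pos_of_pos_left n (Nat.pos_of_ne_zero hm)
  have e1 : m * (n / Nat.gcd m n) = Nat.lcm m n := by
    rw [Nat.lcm, Nat.mul_div_assoc m (Nat.gcd_dvd_right m n)]
  have e2 : n * (m / Nat.gcd m n) = Nat.lcm m n := by
    rw [Nat.gcd_comm m n, Nat.lcm_comm m n, Nat.lcm,
      Nat.mul_div_assoc n (Nat.gcd_dvd_right n m)]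
  have ha : x ^ (n / Nat.gcd m n) ∈ U K m := by
    rw [mem_U, ← pow_mul, mul_comm, e1, mem_U.mp hx]
  have hb : x ^ (m / Nat.gcd m n) ∈ U K n := by
    rw [mem_U, ← pow_mul, mul_comm, e2, mem_U.mp hx]
  have hcop : Nat.Coprime (m / Nat.gcd m n) (n / Nat.gcd m n) :=
    Nat.coprime_div_gcd_div_gcd hgpos
  set s := Nat.gcdA (m / Nat.gcd m n) (n / Nat.gcd m n) with hs
  set t := Nat.gcdB (m / Nat.gcd m n) (n / Nat.gcd m n) with ht
  have bez : ((m / Nat.gcd m n : ℕ) : ℤ) * s + ((n / Nat.gcd m n : ℕ) : ℤ) * t = 1 := by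
    have h := Nat.gcd_eq_gcd_ab (m / Nat.gcd m n) (n / Nat.gcd m n)
    rw [hcop] at h
    rw [← hs, ← ht] at h
    exact_mod_cast h.symm
  have key : (x ^ (n / Nat.gcd m n)) ^ t * (x ^ (m / Nat.gcd m n)) ^ s = x :=
    calc (x ^ (n / Nat.gcd m n)) ^ t * (x ^ (m / Nat.gcd m n)) ^ s
        = x ^ (((n / Nat.gcd m n : ℕ) : ℤ) * t) * x ^ (((m / Nat.gcd m n : ℕ) : ℤ) * s) := by
          rw [zpow_mul, zpow_mul, zpow_natCast, zpow_natCast]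
      _ = x ^ (((m / Nat.gcd m n : ℕ) : ℤ) * s + ((n / Nat.gcd m n : ℕ) : ℤ) * t) := by
          rw [add_comm, zpow_add]
      _ = x := by rw [bez, zpow_one]
  exact Subgroup.mem_sup.mpr ⟨(x ^ (n / Nat.gcd m n)) ^ t, (U K m).zpow_mem ha t,
    (x ^ (m / Nat.gcd m n)) ^ s, (U K n).zpow_mem hb s, key⟩

private lemma U_finite {K : Type*} [Field K] {d : ℕ} (hd : d ≠ 0) :
    (U K d : Set Kˣ).Finite ∧ ((U K d : Set Kˣ)).ncard ≤ d := by
  classical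
  have hsub : (fun u : Kˣ => (u : K)) '' (U K d : Set Kˣ) ⊆ ↑(nthRoots d (1 : K)).toFinset := by
    rintro - ⟨u, hu, rfl⟩
    simp only [Multiset.mem_toFinset, Finset.mem_coe]
    rw [mem_nthRoots (Nat.pos_of_ne_zero hd)]
    have : ((u ^ d : Kˣ) : K) = ((1 : Kˣ) : K) := by rw [mem_U.mp hu]
    simpa using this
  have hinj : Set.InjOn (fun u : Kˣ => (u : K)) (U K d : Set Kˣ) :=
    fun a _ b _ hab => Units.ext hab
  have hfin : ((fun u : Kˣ => (u : K)) '' (U K d : Set Kˣ)).Finite :=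
    (Set.Finite.subset (Multiset.toFinset (nthRoots d (1 : K))).finite_toSet hsub)
  have h1 : (U K d : Set Kˣ).Finite := Set.Finite.of_finite_image hfin hinj
  constructor
  · exact h1
  · calc (U K d : Set Kˣ).ncard
        = ((fun u : Kˣ => (u : K)) '' (U K d : Set Kˣ)).ncard :=
          (Set.ncard_image_of_injOn hinj).symm
      _ ≤ (↑(nthRoots d (1 : K)).toFinset : Set K).ncard :=
          Set.ncard_le_ncard hsub (Multiset.toFinset _).finite_toSet
      _ = (nthRoots d (1 : K)).toFinset.card := Set.ncard_coe_finset _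
      _ ≤ Multiset.card (nthRoots d (1 : K)) := Multiset.toFinset_card_le _
      _ ≤ d := card_nthRoots d 1

private lemma finite_subgroup_eq_U {K : Type*} [Field K] {H : Subgroup Kˣ}
    (hH : (H : Set Kˣ).Finite) : ∃ d : ℕ, d ≠ 0 ∧ H = U K d := by
  have : Finite H := hH.to_subtype
  have hpos : 0 < Nat.card H := Nat.card_pos
  have hle : H ≤ U K (Nat.card H) := by
    intro x hx
    rw [mem_U]
    have h1 : (⟨x, hx⟩ : H) ^ Nat.card H = 1 := pow_card_eq_one'
    have h2 : ((⟨x, hx⟩ : H) : Kˣ) ^ Nat.card H = 1 := by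
      rw [← SubmonoidClass.coe_pow, h1, OneMemClass.coe_one]
    exact h2
  have hcard : (H : Set Kˣ).ncard = Nat.card H := by
    rw [← Nat.card_coe_set_eq]
    rfl
  have hset : (H : Set Kˣ) = (U K (Nat.card H) : Set Kˣ) := by
    apply Set.eq_of_subset_of_ncard_le hle _ (U_finite hpos.ne').1
    rw [hcard]
    exact le_trans (U_finite hpos.ne').2 le_rfl
  exact ⟨Nat.card H, hpos.ne', SetLike.coe_injective hset⟩

/-- The key distributivity inequality for closed subgroups of `Kˣ`. -/
private lemma key_le {K : Type*} [Field K] {A B C : Subgroup Kˣ}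
    (hA : (A : Set Kˣ).Finite ∨ A = ⊤) (hB : (B : Set Kˣ).Finite ∨ B = ⊤)
    (hC : (C : Set Kˣ).Finite ∨ C = ⊤) :
    (A ⊔ C) ⊓ (B ⊔ C) ≤ (A ⊓ B) ⊔ C := by
  rcases hC with hC | rfl
  · rcases hA with hA | rfl
    · rcases hB with hB | rfl
      · obtain ⟨a, ha, rfl⟩ := finite_subgroup_eq_U hA
        obtain ⟨b, hb, rfl⟩ := finite_subgroup_eq_U hB
        obtain ⟨c, hc, rfl⟩ := finite_subgroup_eq_U hC
        intro x hx
        obtain ⟨h1, h2⟩ := Subgroup.mem_inf.mp hx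
        have m1 : x ∈ U K (Nat.lcm c a) :=
          sup_le (U_mono (Nat.dvd_lcm_right c a)) (U_mono (Nat.dvd_lcm_left c a)) h1
        have m2 : x ∈ U K (Nat.lcm c b) :=
          sup_le (U_mono (Nat.dvd_lcm_right c b)) (U_mono (Nat.dvd_lcm_left c b)) h2
        have m3 : x ∈ U K (Nat.lcm c (Nat.gcd a b)) :=
          U_mono (nat_distrib ha hb hc) (mem_U_gcd m1 m2)
        have m4 : x ∈ U K c ⊔ U K (Nat.gcd a b) := U_lcm_le_sup hc m3
        have m5 : U K c ⊔ U K (Nat.gcd a b) ≤ (U K a ⊓ U K b) ⊔ U K c := by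
          rw [sup_comm]
          exact sup_le_sup_right
            (le_inf (U_mono (Nat.gcd_dvd_left a b)) (U_mono (Nat.gcd_dvd_right a b))) _
        exact m5 m4
      · simp
    · simp
  · simp

private lemma comm_aux1 {G : Type*} [CommGroup G] {r a c u : G} (h : r * a = c * u) :
    c⁻¹ * r = u * a⁻¹ := by
  have h2 : c⁻¹ * (r * a) * a⁻¹ = c⁻¹ * r := by group
  rw [← h2, h]; group

private lemma comm_aux2 {G : Type*} [CommGroup G] {d w c r : G} (h : d * w = c⁻¹ * r) :
    c * w = r * d⁻¹ := by
  apply mul_left_cancel (a := d)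
  rw [mul_left_comm, h, mul_comm r d⁻¹]
  group

private lemma usmul_eq_mul {K : Type*} [Field K] (u x : Kˣ) : u • x = u * x := by
  ext
  rfl

/-- The triple (Helly) lemma for cosets of closed subgroups. -/
private lemma helly3 {K : Type*} [Field K] {A B C : Subgroup Kˣ}
    (hA : (A : Set Kˣ).Finite ∨ A = ⊤) (hB : (B : Set Kˣ).Finite ∨ B = ⊤)
    (hC : (C : Set Kˣ).Finite ∨ C = ⊤) (r c : Kˣ)
    (h1 : (r • (A : Set Kˣ) ∩ c • (C : Set Kˣ)).Nonempty)
    (h2 : (r • (B : Set Kˣ) ∩ c • (C : Set Kˣ)).Nonempty) :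
    (r • ((A ⊓ B : Subgroup Kˣ) : Set Kˣ) ∩ c • (C : Set Kˣ)).Nonempty := by
  obtain ⟨x, hxA, hxC⟩ := h1
  obtain ⟨y, hyB, hyC⟩ := h2
  rw [Set.mem_smul_set] at hxA hxC hyB hyC
  obtain ⟨a, ha, hax⟩ := hxA
  obtain ⟨u, hu, hux⟩ := hxC
  obtain ⟨b, hb, hby⟩ := hyB
  obtain ⟨v, hv, hvy⟩ := hyC
  rw [usmul_eq_mul] at hax hux hby hvy
  have e1 : c⁻¹ * r = u * a⁻¹ := comm_aux1 (hax.trans hux.symm)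
  have e2 : c⁻¹ * r = v * b⁻¹ := comm_aux1 (hby.trans hvy.symm)
  have g1 : c⁻¹ * r ∈ A ⊔ C :=
    Subgroup.mem_sup.mpr ⟨a⁻¹, inv_mem ha, u, hu, by rw [e1, mul_comm]⟩
  have g2 : c⁻¹ * r ∈ B ⊔ C :=
    Subgroup.mem_sup.mpr ⟨b⁻¹, inv_mem hb, v, hv, by rw [e2, mul_comm]⟩
  have g3 : c⁻¹ * r ∈ (A ⊓ B) ⊔ C :=
    key_le hA hB hC (Subgroup.mem_inf.mpr ⟨g1, g2⟩)
  obtain ⟨d, hd, w, hw, hdw⟩ := Subgroup.mem_sup.mp g3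
  refine ⟨r * d⁻¹, ?_, ?_⟩
  · exact Set.mem_smul_set.mpr ⟨d⁻¹, inv_mem hd, by rw [usmul_eq_mul]⟩
  · exact Set.mem_smul_set.mpr ⟨w, hw, by rw [usmul_eq_mul, comm_aux2 hdw]⟩

private lemma coset_eq_of_mem {K : Type*} [Field K] {H : Subgroup Kˣ} {g r : Kˣ}
    (h : r ∈ g • (H : Set Kˣ)) : g • (H : Set Kˣ) = r • (H : Set Kˣ) := by
  obtain ⟨a, ha, hga⟩ := Set.mem_smul_set.mp h
  rw [usmul_eq_mul] at hga
  subst hga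
  ext x
  rw [Set.mem_smul_set_iff_inv_smul_mem, Set.mem_smul_set_iff_inv_smul_mem,
    usmul_eq_mul, usmul_eq_mul, mul_inv_rev, mul_assoc]
  exact ⟨fun hx => (H.mul_mem_cancel_left (inv_mem ha)).mpr hx,
    fun hx => (H.mul_mem_cancel_left (inv_mem ha)).mp hx⟩

/-- in the multiplicative group `Kˣ` of an algebraically closed field,
any finite family of cosets of Zariski-closed subgroups (i.e. finite or full
subgroups) with pairwise nonempty intersections has nonempty total intersection;
i.e. the Helly dimension of `Kˣ` is 2. -/
theorem helly_units_algClosed (K : Type*) [Field K] [IsAlgClosed K]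
    (t : ℕ) (g : Fin t → Kˣ) (H : Fin t → Subgroup Kˣ)
    (hclosed : ∀ i, (H i : Set Kˣ).Finite ∨ H i = ⊤)
    (hpair : ∀ i j, ((g i • (H i : Set Kˣ)) ∩ (g j • (H j : Set Kˣ))).Nonempty) :
    (⋂ i, g i • (H i : Set Kˣ)).Nonempty := by
  induction t with
  | zero => exact ⟨1, Set.mem_iInter.mpr fun i => i.elim0⟩
  | succ n ih =>
    rcases n with _ | m
    · refine ⟨g 0, Set.mem_iInter.mpr fun i => ?_⟩
      have hi : i = 0 := Fin.ext (by omega)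
      subst hi
      exact Set.mem_smul_set.mpr ⟨1, (H 0).one_mem, by rw [usmul_eq_mul, mul_one]⟩
    · -- t = m + 2 : merge the cosets at indices 0 and 1.
      obtain ⟨r, hr0, hr1⟩ := hpair 0 1
      have hc0 : g 0 • (H 0 : Set Kˣ) = r • (H 0 : Set Kˣ) := coset_eq_of_mem hr0
      have hc1 : g 1 • (H 1 : Set Kˣ) = r • (H 1 : Set Kˣ) := coset_eq_of_mem hr1
      have hmerge : r • ((H 0 ⊓ H 1 : Subgroup Kˣ) : Set Kˣ)
          = (g 0 • (H 0 : Set Kˣ)) ∩ (g 1 • (H 1 : Set Kˣ)) := by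
        rw [hc0, hc1, Subgroup.coe_inf, Set.smul_set_inter]
      set g' : Fin (m + 1) → Kˣ := Fin.cases r (fun k => g k.succ.succ) with hg'
      set H' : Fin (m + 1) → Subgroup Kˣ :=
        Fin.cases (H 0 ⊓ H 1) (fun k => H k.succ.succ) with hH'
      have hclosed' : ∀ i, (H' i : Set Kˣ).Finite ∨ H' i = ⊤ := by
        intro i
        induction i using Fin.cases with
        | zero =>
          simp only [hH', Fin.cases_zero]
          rcases hclosed 0 with h0 | h0
          · exact Or.inl (h0.subset (SetLike.coe_subset_coe.mpr inf_le_left))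
          · rw [h0, top_inf_eq]
            exact hclosed 1
        | succ k =>
          simp only [hH', Fin.cases_succ]
          exact hclosed k.succ.succ
      have hpair' : ∀ i j, ((g' i • (H' i : Set Kˣ)) ∩ (g' j • (H' j : Set Kˣ))).Nonempty := by
        have base : ∀ k : Fin m,
            ((g' 0 • (H' 0 : Set Kˣ)) ∩ (g' k.succ • (H' k.succ : Set Kˣ))).Nonempty := by
          intro k
          simp only [hg', hH', Fin.cases_zero, Fin.cases_succ]
          apply helly3 (hclosed 0) (hclosed 1) (hclosed k.succ.succ)
          · rw [← hc0]
            exact hpair 0 k.succ.succ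
          · rw [← hc1]
            exact hpair 1 k.succ.succ
        intro i j
        induction i using Fin.cases with
        | zero =>
          induction j using Fin.cases with
          | zero =>
            refine ⟨g' 0, ?_, ?_⟩ <;>
              exact Set.mem_smul_set.mpr ⟨1, (H' 0).one_mem, by rw [usmul_eq_mul, mul_one]⟩
          | succ k => exact base k
        | succ k =>
          induction j using Fin.cases with
          | zero =>
            rw [Set.inter_comm]
            exact base k
          | succ l =>
            simp only [hg', hH', Fin.cases_succ]
            exact hpair k.succ.succ l.succ.succ
      obtain ⟨x, hx⟩ := ih g' H' hclosed' hpair'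
      have hx' := Set.mem_iInter.mp hx
      have hx0 : x ∈ (g 0 • (H 0 : Set Kˣ)) ∩ (g 1 • (H 1 : Set Kˣ)) := by
        rw [← hmerge]
        have := hx' 0
        simpa only [hg', hH', Fin.cases_zero] using this
      refine ⟨x, Set.mem_iInter.mpr fun i => ?_⟩
      induction i using Fin.cases with
      | zero => exact hx0.1
      | succ j =>
        induction j using Fin.cases with
        | zero => exact hx0.2
        | succ k =>
          have := hx' k.succ
          simpa only [hg', hH', Fin.cases_succ] using this
end

section
/- Let H be a finite cyclic group. If g₁H₁, …, g_tH_t are cosets of subgroups of H such that any two of them intersect nontrivially, then the intersection of all of them is nonempty. -/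
open Pointwise

/-- gcd distributes over lcm in ℕ (for nonzero arguments). -/
lemma helly_nat_gcd_lcm_distrib (a b c : ℕ) (ha : a ≠ 0) (hb : b ≠ 0) (hc : c ≠ 0) :
    Nat.gcd (Nat.lcm a b) c = Nat.lcm (Nat.gcd a c) (Nat.gcd b c) := by
  have hab : Nat.lcm a b ≠ 0 := Nat.lcm_ne_zero ha hb
  have hac : Nat.gcd a c ≠ 0 := Nat.gcd_ne_zero_left ha
  have hbc : Nat.gcd b c ≠ 0 := Nat.gcd_ne_zero_left hb
  have h1 : Nat.gcd (Nat.lcm a b) c ≠ 0 := Nat.gcd_ne_zero_left hab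
  have h2 : Nat.lcm (Nat.gcd a c) (Nat.gcd b c) ≠ 0 := Nat.lcm_ne_zero hac hbc
  apply Nat.factorization_inj h1 h2
  rw [Nat.factorization_gcd hab hc, Nat.factorization_lcm ha hb,
    Nat.factorization_lcm hac hbc, Nat.factorization_gcd ha hc,
    Nat.factorization_gcd hb hc]
  ext p
  simp only [Finsupp.inf_apply, Finsupp.sup_apply]
  exact min_max_distrib_right _ _ _

lemma helly_finsetLcm_ne_zero {ι : Type*} (s : Finset ι) (f : ι → ℕ)
    (hf : ∀ i ∈ s, f i ≠ 0) : s.lcm f ≠ 0 := by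
  classical
  induction s using Finset.induction_on with
  | empty => simp
  | @insert a s' hx ih =>
    rw [Finset.lcm_insert]
    have hfa : f a ≠ 0 := hf a (Finset.mem_insert_self a s')
    have hlcm : s'.lcm f ≠ 0 := ih (fun i hi => hf i (Finset.mem_insert_of_mem hi))
    exact Nat.lcm_ne_zero hfa hlcm

/-- gcd distributes over a finite lcm. -/
lemma helly_gcd_finsetLcm_distrib {ι : Type*} (s : Finset ι) (f : ι → ℕ) (c : ℕ)
    (hf : ∀ i ∈ s, f i ≠ 0) (hc : c ≠ 0) :
    Nat.gcd (s.lcm f) c = s.lcm (fun i => Nat.gcd (f i) c) := by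
  classical
  induction s using Finset.induction_on with
  | empty => simp
  | @insert a s' hx ih =>
    rw [Finset.lcm_insert, Finset.lcm_insert]
    have hfa : f a ≠ 0 := hf a (Finset.mem_insert_self a s')
    have hf' : ∀ i ∈ s', f i ≠ 0 := fun i hi => hf i (Finset.mem_insert_of_mem hi)
    have hlcm : s'.lcm f ≠ 0 := helly_finsetLcm_ne_zero s' f hf'
    have : lcm (f a) (s'.lcm f) = Nat.lcm (f a) (s'.lcm f) := rfl
    rw [this]
    have hdistrib := helly_nat_gcd_lcm_distrib (f a) (s'.lcm f) c hfa hlcm hc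
    rw [hdistrib, ih hf']
    rfl

/-- merging a congruence class mod `L` with one congruence. -/
lemma helly_merge (L m0 : ℕ) (z c0 : ℤ)
    (h : (Nat.gcd L m0 : ℤ) ∣ z - c0) :
    ∃ w : ℤ, (L : ℤ) ∣ w - z ∧ (m0 : ℤ) ∣ w - c0 := by
  obtain ⟨q, hq⟩ := h
  refine ⟨z - (L : ℤ) * Int.gcdA L m0 * q, ⟨-(Int.gcdA L m0 * q), by ring⟩, ?_⟩
  refine ⟨Int.gcdB L m0 * q, ?_⟩
  have hbezout : (Nat.gcd L m0 : ℤ) = L * Int.gcdA L m0 + m0 * Int.gcdB L m0 := by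
    have := Int.gcd_eq_gcd_ab (L : ℤ) (m0 : ℤ)
    simpa using this
  have : z - c0 = (L * Int.gcdA L m0 + m0 * Int.gcdB L m0) * q := by
    rw [← hbezout]; exact hq
  linarith [this]

/-- Chinese remainder theorem for pairwise compatible congruences. -/
lemma helly_crt : ∀ (t : ℕ) (m : Fin t → ℕ), (∀ i, m i ≠ 0) → ∀ (c : Fin t → ℤ),
    (∀ i j, (Nat.gcd (m i) (m j) : ℤ) ∣ c i - c j) →
    ∃ z : ℤ, ∀ i, (m i : ℤ) ∣ z - c i := by
  intro t
  induction t with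
  | zero => intro m _ c _; exact ⟨0, fun i => i.elim0⟩
  | succ n ih =>
    intro m hm c h
    obtain ⟨z, hz⟩ := ih (fun i => m i.succ) (fun i => hm i.succ)
      (fun i => c i.succ) (fun i j => h i.succ j.succ)
    set L : ℕ := Finset.univ.lcm (fun i : Fin n => m i.succ) with hL
    have hLne : L ≠ 0 :=
      helly_finsetLcm_ne_zero Finset.univ _ (fun i _ => hm i.succ)
    -- gcd L (m 0) divides z - c 0
    have hdvd : (Nat.gcd L (m 0) : ℤ) ∣ z - c 0 := by
      have key : Nat.gcd L (m 0) =
          Finset.univ.lcm (fun i : Fin n => Nat.gcd (m i.succ) (m 0)) := by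
        rw [hL]
        exact helly_gcd_finsetLcm_distrib Finset.univ _ (m 0)
          (fun i _ => hm i.succ) (hm 0)
      rw [key, Int.natCast_dvd]
      apply Finset.lcm_dvd
      intro i _
      rw [← Int.natCast_dvd]
      have hg1 : (Nat.gcd (m i.succ) (m 0) : ℤ) ∣ z - c i.succ :=
        dvd_trans (by exact_mod_cast Nat.gcd_dvd_left _ _) (hz i)
      have hg2 : (Nat.gcd (m i.succ) (m 0) : ℤ) ∣ c i.succ - c 0 := h i.succ 0
      have heq : z - c 0 = (z - c i.succ) + (c i.succ - c 0) := by ring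
      rw [heq]
      exact dvd_add hg1 hg2
    obtain ⟨w, hw1, hw2⟩ := helly_merge L (m 0) z (c 0) hdvd
    refine ⟨w, fun i => ?_⟩
    rcases Fin.eq_zero_or_eq_succ i with rfl | ⟨j, rfl⟩
    · exact hw2
    · have h1 : (m j.succ : ℤ) ∣ w - z := by
        refine dvd_trans ?_ hw1
        exact_mod_cast Finset.dvd_lcm (Finset.mem_univ j)
      have h2 := hz j
      have : w - c j.succ = (w - z) + (z - c j.succ) := by ring
      rw [this]
      exact dvd_add h1 h2

/-- membership in a subgroup of a finite cyclic group is detected by a power. -/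
lemma helly_mem_iff_pow (H : Type*) [Group H] [Fintype H] [IsCyclic H]
    (K : Subgroup H) (x : H) : x ∈ K ↔ x ^ Nat.card K = 1 := by
  classical
  constructor
  · intro hx
    have h1 : (⟨x, hx⟩ : K) ^ Nat.card K = 1 := pow_card_eq_one'
    have h2 : (((⟨x, hx⟩ : K) ^ Nat.card K : K) : H) = x ^ Nat.card K :=
      SubmonoidClass.coe_pow _ _
    rw [← h2, h1, OneMemClass.coe_one]
  · intro hx
    set k := Nat.card K with hk
    have hkpos : 0 < k := Nat.card_pos
    set S : Finset H := Finset.univ.filter (fun b => b ^ k = 1) with hS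
    set T : Finset H := (K : Set H).toFinset with hT
    have hTS : T ⊆ S := by
      intro y hy
      rw [hT, Set.mem_toFinset] at hy
      rw [hS, Finset.mem_filter]
      refine ⟨Finset.mem_univ y, ?_⟩
      have h1 : (⟨y, hy⟩ : K) ^ k = 1 := by rw [hk]; exact pow_card_eq_one'
      have := congrArg (Subtype.val) h1
      simpa using this
    have hcardT : T.card = k := by
      rw [hT, Set.toFinset_card, hk, Nat.card_eq_fintype_card]
      exact Fintype.card_congr (Equiv.setCongr rfl)
    have hcardS : S.card ≤ k := IsCyclic.card_pow_eq_one_le hkpos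
    have : S = T := (Finset.eq_of_subset_of_card_le hTS (by rw [hcardT]; exact hcardS)).symm
    have hxS : x ∈ S := by rw [hS, Finset.mem_filter]; exact ⟨Finset.mem_univ x, hx⟩
    rw [this, hT, Set.mem_toFinset] at hxS
    exact hxS

/-- in a finite cyclic group, cosets of subgroups that pairwise
intersect have a common element. -/
theorem helly_finite_cyclic (H : Type*) [Group H] [Fintype H] [IsCyclic H]
    (t : ℕ) (g : Fin t → H) (Hs : Fin t → Subgroup H)
    (hpair : ∀ i j, ((g i • (Hs i : Set H)) ∩ (g j • (Hs j : Set H))).Nonempty) :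
    (⋂ i, g i • (Hs i : Set H)).Nonempty := by
  classical
  obtain ⟨a, ha⟩ := IsCyclic.exists_generator (α := H)
  set n := Nat.card H with hn
  have hnpos : 0 < n := Nat.card_pos
  have horder : orderOf a = n := orderOf_eq_card_of_forall_mem_zpowers ha
  -- exponents of the g i
  have hc : ∀ i, ∃ ci : ℤ, a ^ ci = g i := fun i =>
    Subgroup.mem_zpowers_iff.mp (ha (g i))
  choose c hcspec using hc
  -- moduli
  set m : Fin t → ℕ := fun i => n / Nat.card (Hs i) with hm
  have hcard_dvd : ∀ i, Nat.card (Hs i) ∣ n := fun i =>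
    Subgroup.card_subgroup_dvd_card (Hs i)
  have hmk : ∀ i, m i * Nat.card (Hs i) = n := fun i =>
    Nat.div_mul_cancel (hcard_dvd i)
  have hmne : ∀ i, m i ≠ 0 := by
    intro i hcon
    have := hmk i
    rw [hcon, zero_mul] at this
    omega
  -- membership characterization for subgroups
  have hmemK : ∀ (i : Fin t) (w : ℤ), a ^ w ∈ Hs i ↔ (m i : ℤ) ∣ w := by
    intro i w
    rw [helly_mem_iff_pow H (Hs i) (a ^ w), ← zpow_natCast, ← zpow_mul,
      ← orderOf_dvd_iff_zpow_eq_one, horder]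
    have hk : (Nat.card (Hs i) : ℤ) ≠ 0 := by
      exact_mod_cast Nat.card_pos.ne'
    have hcast : (n : ℤ) = (m i : ℤ) * (Nat.card (Hs i) : ℤ) := by
      exact_mod_cast (hmk i).symm
    constructor
    · intro hdvd
      have h2 : (m i : ℤ) * (Nat.card (Hs i) : ℤ) ∣ w * (Nat.card (Hs i) : ℤ) := by
        rw [← hcast]; exact hdvd
      exact (mul_dvd_mul_iff_right hk).mp h2
    · intro hdvd
      rw [hcast]
      exact mul_dvd_mul_right hdvd _
  -- membership characterization for cosets
  have hmemC : ∀ (i : Fin t) (w : ℤ),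
      a ^ w ∈ g i • (Hs i : Set H) ↔ (m i : ℤ) ∣ w - c i := by
    intro i w
    rw [Set.mem_smul_set_iff_inv_smul_mem]
    have : (g i)⁻¹ • a ^ w = a ^ (w - c i) := by
      rw [← hcspec i]
      show (a ^ c i)⁻¹ * a ^ w = a ^ (w - c i)
      rw [← zpow_neg, ← zpow_add, neg_add_eq_sub]
    rw [this, SetLike.mem_coe, hmemK i (w - c i)]
  -- pairwise compatibility
  have hcompat : ∀ i j, (Nat.gcd (m i) (m j) : ℤ) ∣ c i - c j := by
    intro i j
    obtain ⟨x, hxi, hxj⟩ := hpair i j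
    obtain ⟨w, hw⟩ := Subgroup.mem_zpowers_iff.mp (ha x)
    rw [← hw] at hxi hxj
    have h1 : (m i : ℤ) ∣ w - c i := (hmemC i w).mp hxi
    have h2 : (m j : ℤ) ∣ w - c j := (hmemC j w).mp hxj
    have hg1 : (Nat.gcd (m i) (m j) : ℤ) ∣ w - c i :=
      dvd_trans (by exact_mod_cast Nat.gcd_dvd_left _ _) h1
    have hg2 : (Nat.gcd (m i) (m j) : ℤ) ∣ w - c j :=
      dvd_trans (by exact_mod_cast Nat.gcd_dvd_right _ _) h2
    have : c i - c j = (w - c j) - (w - c i) := by ring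
    rw [this]
    exact dvd_sub hg2 hg1
  obtain ⟨z, hz⟩ := helly_crt t m hmne c hcompat
  refine ⟨a ^ z, Set.mem_iInter.mpr fun i => ?_⟩
  exact (hmemC i z).mpr (hz i)
end

section
/- Let K be a field of characteristic zero, D ⊆ ℕ₀ⁿ, and M ⊆ D a subset such that for every subset J ⊆ {1,…,n}, every d ∈ D with supp(d) ⊆ J lies in the subgroup of ℤⁿ generated by M_J := { m ∈ M : supp(m) ⊆ J }. Then the monomials { x^m : m ∈ M } form a separating set for the algebra R = K[x^d : d ∈ D]: for any v, w ∈ Kⁿ, if x^d(v) ≠ x^d(w) for some d ∈ D, then x^m(v) ≠ x^m(w) for some m ∈ M. -/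
/-!
Suppose `v` and `w` agree on every monomial `x^m`, `m ∈ M`, and let `d ∈ D`. The monomial
`x^d` is nonzero at `w` exactly when `supp d ⊆ supp w`; then `d` lies in the group generated
by exponents `m ∈ M` with `x^m(w) ≠ 0`, hence `x^m(v) ≠ 0`, i.e. `supp m ⊆ supp v`; a bound
on supports passes to the generated subgroup, so `supp d ⊆ supp v` and `x^d(v) ≠ 0`. By
symmetry `x^d` vanishes at `v` iff it vanishes at `w`. If it vanishes at neither, then
`supp d ⊆ J := supp v ∩ supp w`, and on exponents supported in `J` the map
`a ↦ ∏ (v i / w i)^(a i)` is a homomorphism `ℤ^J → Kˣ` killing `M_J`, hence killing `d`.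
-/

open Finset Function

section

variable {σ : Type*}

theorem support_subset_of_mem_addSubgroupClosure {S : Set (σ → ℤ)} {J : Set σ}
    (hS : ∀ a ∈ S, support a ⊆ J) {a : σ → ℤ} (ha : a ∈ AddSubgroup.closure S) :
    support a ⊆ J := by
  induction ha using AddSubgroup.closure_induction with
  | mem a haS => exact hS a haS
  | zero => simp
  | add a b _ _ iha ihb => exact (support_add a b).trans (Set.union_subset iha ihb)
  | neg a _ ih => rwa [support_neg]

theorem support_natCast_comp (d : σ → ℕ) : support (fun i => (d i : ℤ)) = support d := by
  ext; simp

variable [Fintype σ]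

theorem prod_zpow_eq_of_mem_addSubgroupClosure {G : Type*} [CommGroup G] {x y : σ → G}
    {S : Set (σ → ℤ)} (hS : ∀ a ∈ S, ∏ i, x i ^ a i = ∏ i, y i ^ a i) {a : σ → ℤ}
    (ha : a ∈ AddSubgroup.closure S) : ∏ i, x i ^ a i = ∏ i, y i ^ a i := by
  induction ha using AddSubgroup.closure_induction with
  | mem a haS => exact hS a haS
  | zero => simp
  | add a b _ _ iha ihb => simp only [Pi.add_apply, zpow_add, prod_mul_distrib, iha, ihb]
  | neg a _ ih => simp only [Pi.neg_apply, zpow_neg, prod_inv_distrib, ih]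

theorem prod_pow_ne_zero_iff_support_subset {M₀ : Type*} [CommMonoidWithZero M₀]
    [NoZeroDivisors M₀] [Nontrivial M₀] {v : σ → M₀} {d : σ → ℕ} :
    ∏ i, v i ^ d i ≠ 0 ↔ support d ⊆ support v := by
  simp [prod_ne_zero_iff, support_subset_iff, not_imp_not]

theorem prod_pow_congr_of_support_subset {M : Type*} [CommMonoid M] {v w : σ → M}
    {d : σ → ℕ} (h : ∀ i ∈ support d, v i = w i) : ∏ i, v i ^ d i = ∏ i, w i ^ d i :=
  prod_congr rfl fun i _ => by
    by_cases hdi : d i = 0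
    · simp [hdi]
    · rw [h i hdi]

theorem exists_units_prod_pow_eq {G₀ : Type*} [CommGroupWithZero G₀] (v : σ → G₀) :
    ∃ x : σ → G₀ˣ, ∀ d : σ → ℕ, support d ⊆ support v →
      ∏ i, v i ^ d i = ((∏ i, x i ^ d i : G₀ˣ) : G₀) := by
  classical
  refine ⟨fun i => if hi : v i = 0 then 1 else Units.mk0 (v i) hi, fun d hd => ?_⟩
  push_cast
  exact prod_pow_congr_of_support_subset fun i hi => by
    have hvi : v i ≠ 0 := hd hi
    rw [dif_neg hvi, Units.val_mk0]

variable {K : Type*}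

theorem prod_pow_ne_zero_of_mem_addSubgroupClosure [CommMonoidWithZero K] [NoZeroDivisors K]
    [Nontrivial K] {v w : σ → K} {S : Set (σ → ℕ)}
    (hS : ∀ m ∈ S, ∏ i, v i ^ m i = ∏ i, w i ^ m i) {d : σ → ℕ}
    (hd : (fun i => (d i : ℤ)) ∈ AddSubgroup.closure
      ((fun m i => (m i : ℤ)) '' {m ∈ S | support m ⊆ support w})) :
    ∏ i, v i ^ d i ≠ 0 := by
  rw [prod_pow_ne_zero_iff_support_subset, ← support_natCast_comp]
  refine support_subset_of_mem_addSubgroupClosure ?_ hd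
  rintro _ ⟨m, ⟨hmS, hmw⟩, rfl⟩
  rw [support_natCast_comp, ← prod_pow_ne_zero_iff_support_subset, hS m hmS]
  exact prod_pow_ne_zero_iff_support_subset.mpr hmw

theorem prod_pow_eq_of_mem_addSubgroupClosure [CommGroupWithZero K] {v w : σ → K}
    {S : Set (σ → ℕ)} (hS : ∀ m ∈ S, ∏ i, v i ^ m i = ∏ i, w i ^ m i) {d : σ → ℕ}
    (hd : (fun i => (d i : ℤ)) ∈ AddSubgroup.closure
      ((fun m i => (m i : ℤ)) '' {m ∈ S | support m ⊆ support v ∩ support w})) :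
    ∏ i, v i ^ d i = ∏ i, w i ^ d i := by
  obtain ⟨x, hx⟩ := exists_units_prod_pow_eq v
  obtain ⟨y, hy⟩ := exists_units_prod_pow_eq w
  have hxy : ∀ a ∈ (fun m i => (m i : ℤ)) '' {m ∈ S | support m ⊆ support v ∩ support w},
      ∏ i, x i ^ a i = ∏ i, y i ^ a i := by
    rintro _ ⟨m, ⟨hmS, hmvw⟩, rfl⟩
    simp only [zpow_natCast]
    exact Units.ext <| by
      rw [← hx m (hmvw.trans Set.inter_subset_left), ← hy m (hmvw.trans Set.inter_subset_right),
        hS m hmS]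
  have hdvw : support d ⊆ support v ∩ support w := by
    rw [← support_natCast_comp]
    refine support_subset_of_mem_addSubgroupClosure ?_ hd
    rintro _ ⟨m, ⟨_, hmvw⟩, rfl⟩
    rwa [support_natCast_comp]
  have hd' := prod_zpow_eq_of_mem_addSubgroupClosure hxy hd
  simp only [zpow_natCast] at hd'
  rw [hx d (hdvw.trans Set.inter_subset_left), hy d (hdvw.trans Set.inter_subset_right), hd']

end

theorem monomials_separating_of_closure_char_zero_general
    (K : Type*) [Field K] (n : ℕ)
    (D M : Set (Fin n → ℕ))
    (ι : (Fin n → ℕ) → (Fin n → ℤ)) (hι : ι = fun m i => (m i : ℤ))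
    (hyp : ∀ J : Set (Fin n), ∀ d ∈ D, {i | d i ≠ 0} ⊆ J →
      ι d ∈ AddSubgroup.closure (ι '' {m | m ∈ M ∧ {i | m i ≠ 0} ⊆ J})) :
    ∀ v w : Fin n → K, (∃ d ∈ D, (∏ i, v i ^ d i) ≠ (∏ i, w i ^ d i)) →
      ∃ m ∈ M, (∏ i, v i ^ m i) ≠ (∏ i, w i ^ m i) := by
  subst hι
  intro v w
  contrapose!
  intro hvw d hd
  have transfer : ∀ {v w : Fin n → K}, (∀ m ∈ M, ∏ i, v i ^ m i = ∏ i, w i ^ m i) →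
      ∏ i, w i ^ d i ≠ 0 → ∏ i, v i ^ d i ≠ 0 := fun h hw =>
    prod_pow_ne_zero_of_mem_addSubgroupClosure h
      (hyp _ d hd (prod_pow_ne_zero_iff_support_subset.mp hw))
  by_cases hv : ∏ i, v i ^ d i = 0
  · have hw : ∏ i, w i ^ d i = 0 := by
      by_contra hw
      exact transfer hvw hw hv
    rw [hv, hw]
  · have hw := transfer (fun m hm => (hvw m hm).symm) hv
    refine prod_pow_eq_of_mem_addSubgroupClosure hvw (hyp _ d hd ?_)
    exact Set.subset_inter (prod_pow_ne_zero_iff_support_subset.mp hv)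
      (prod_pow_ne_zero_iff_support_subset.mp hw)

/-- in characteristic zero, if every `d ∈ D` with support in `J` lies
in the subgroup of ℤⁿ generated by `M_J`, for every `J`, then the monomials with
exponents in `M` separate any pair of points separated by monomials with
exponents in `D`. -/
theorem monomials_separating_of_closure_char_zero
    (K : Type*) [Field K] [CharZero K] (n : ℕ)
    (D M : Set (Fin n → ℕ)) (hMD : M ⊆ D)
    (ι : (Fin n → ℕ) → (Fin n → ℤ)) (hι : ι = fun m i => (m i : ℤ))
    (hyp : ∀ J : Set (Fin n), ∀ d ∈ D, {i | d i ≠ 0} ⊆ J →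
      ι d ∈ AddSubgroup.closure (ι '' {m | m ∈ M ∧ {i | m i ≠ 0} ⊆ J})) :
    ∀ v w : Fin n → K, (∃ d ∈ D, (∏ i, v i ^ d i) ≠ (∏ i, w i ^ d i)) →
      ∃ m ∈ M, (∏ i, v i ^ m i) ≠ (∏ i, w i ^ m i) :=
  monomials_separating_of_closure_char_zero_general K n D M ι hι hyp
end

section
/- Let K be an algebraically closed field of characteristic p > 0, D ⊆ ℕ₀ⁿ, and M ⊆ D such that for every d ∈ D there is a non-negative integer α with p^α · d lying in the subgroup of ℤⁿ generated by M_J := { m ∈ M : supp(m) ⊆ supp(d) }. Then for any v, w ∈ Kⁿ with x^d(v) ≠ x^d(w) for some d ∈ D, there exists m in the submonoid of ℕ₀ⁿ generated by M with x^m(v) ≠ x^m(w). -/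
/-!
Suppose `x^m(v) = x^m(w)` for every `m ∈ M` and fix `d ∈ D`. If `v` and `w` have no zero
coordinate on `supp d`, they may be replaced by points of `(Kˣ)ⁿ` agreeing with them there, and
then `e ↦ x^e` is a group homomorphism `ℤⁿ → Kˣ`; the two homomorphisms agree on the generators
`M_J`, hence on `p^α • d`, and injectivity of `x ↦ x^(p^α)` gives `x^d(v) = x^d(w)`. Otherwise,
say `v i = 0` with `d i ≠ 0`: since `(p^α • d) i ≠ 0`, some `m ∈ M_J` has `m i ≠ 0`, so
`x^m(w) = x^m(v) = 0`, which forces a zero coordinate of `w` inside `supp m ⊆ supp d`, and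
both `x^d(v)` and `x^d(w)` vanish.
-/

open Finset Function

theorem exists_mem_apply_ne_zero_of_mem_closure {σ : Type*} {S : Set (σ → ℤ)} {e : σ → ℤ}
    (he : e ∈ AddSubgroup.closure S) {i : σ} (hi : e i ≠ 0) : ∃ s ∈ S, s i ≠ 0 := by
  by_contra! hS
  have : AddSubgroup.closure S ≤ (Pi.evalAddMonoidHom (fun _ => ℤ) i).ker :=
    (AddSubgroup.closure_le _).2 hS
  exact hi (this he)

theorem exists_units_coe_eq {σ K : Type*} [Field K] (v : σ → K) :
    ∃ u : σ → Kˣ, ∀ i, v i ≠ 0 → (u i : K) = v i := by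
  classical
  exact ⟨fun i => if h : v i = 0 then 1 else Units.mk0 _ h, fun i h => by simp [h]⟩

section

variable {σ : Type*} [Fintype σ]

theorem prod_zpow_eq_of_mem_closure {G : Type*} [CommGroup G] {u u' : σ → G}
    {S : Set (σ → ℤ)} (hS : ∀ e ∈ S, ∏ i, u i ^ e i = ∏ i, u' i ^ e i) {e : σ → ℤ}
    (he : e ∈ AddSubgroup.closure S) : ∏ i, u i ^ e i = ∏ i, u' i ^ e i := by
  induction he using AddSubgroup.closure_induction with
  | mem e he => exact hS e he
  | zero => simp
  | add a b _ _ ha hb => simp only [Pi.add_apply, zpow_add, prod_mul_distrib, ha, hb]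
  | neg a _ ha => simp only [Pi.neg_apply, zpow_neg, prod_inv_distrib, ha]

variable {K : Type*} [Field K]

theorem prod_pow_eq_zero_iff {v : σ → K} {m : σ → ℕ} :
    ∏ i, v i ^ m i = 0 ↔ ∃ i, m i ≠ 0 ∧ v i = 0 := by
  simp [prod_eq_zero_iff, and_comm]

theorem coe_prod_units_zpow {v : σ → K} {u : σ → Kˣ} (hu : ∀ i, v i ≠ 0 → (u i : K) = v i)
    {m : σ → ℕ} (hm : ∀ i, m i ≠ 0 → v i ≠ 0) :
    ((∏ i, u i ^ (m i : ℤ) : Kˣ) : K) = ∏ i, v i ^ m i := by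
  push_cast
  refine prod_congr rfl fun i _ => ?_
  by_cases h0 : m i = 0
  · simp [h0]
  · rw [zpow_natCast, hu i (hm i h0)]

theorem prod_pow_eq_zero_of_apply_eq_zero {m d : σ → ℕ} (hmd : support m ⊆ support d)
    {v w : σ → K} (h : ∏ i, v i ^ m i = ∏ i, w i ^ m i) {i : σ} (hmi : m i ≠ 0)
    (hvi : v i = 0) : ∏ i, w i ^ d i = 0 := by
  obtain ⟨j, hmj, hwj⟩ := prod_pow_eq_zero_iff.1 (h ▸ prod_pow_eq_zero_iff.2 ⟨i, hmi, hvi⟩)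
  exact prod_pow_eq_zero_iff.2 ⟨j, hmd hmj, hwj⟩

variable (p : ℕ) [ExpChar K p] {d : σ → ℕ} {S : Set (σ → ℕ)} {α : ℕ}
  {v w : σ → K}

theorem prod_pow_eq_of_pow_smul_mem_closure_of_ne_zero (hS : ∀ m ∈ S, support m ⊆ support d)
    (hd : (p : ℤ) ^ α • (fun i => (d i : ℤ)) ∈
      AddSubgroup.closure ((fun m i => (m i : ℤ)) '' S))
    (hvw : ∀ m ∈ S, ∏ i, v i ^ m i = ∏ i, w i ^ m i)
    (hv : ∀ i, d i ≠ 0 → v i ≠ 0) (hw : ∀ i, d i ≠ 0 → w i ≠ 0) :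
    ∏ i, v i ^ d i = ∏ i, w i ^ d i := by
  obtain ⟨u, hu⟩ := exists_units_coe_eq v
  obtain ⟨u', hu'⟩ := exists_units_coe_eq w
  have hgen : ∀ e ∈ (fun m i => (m i : ℤ)) '' S, ∏ i, u i ^ e i = ∏ i, u' i ^ e i := by
    rintro _ ⟨m, hm, rfl⟩
    ext
    rw [coe_prod_units_zpow hu fun i h => hv i (hS m hm h),
      coe_prod_units_zpow hu' fun i h => hw i (hS m hm h)]
    exact hvw m hm
  have hpow : (∏ i, u i ^ (d i : ℤ)) ^ p ^ α = (∏ i, u' i ^ (d i : ℤ)) ^ p ^ α := by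
    simpa only [Pi.smul_apply, smul_eq_mul, mul_comm _ (d _ : ℤ), zpow_mul,
      ← Nat.cast_pow, zpow_natCast, prod_pow]
      using prod_zpow_eq_of_mem_closure hgen hd
  rw [← coe_prod_units_zpow hu hv, ← coe_prod_units_zpow hu' hw]
  apply iterateFrobenius_inj K p α
  simp only [iterateFrobenius_def, ← Units.val_pow_eq_pow_val, hpow]

theorem prod_pow_eq_of_pow_smul_mem_closure (hS : ∀ m ∈ S, support m ⊆ support d)
    (hd : (p : ℤ) ^ α • (fun i => (d i : ℤ)) ∈
      AddSubgroup.closure ((fun m i => (m i : ℤ)) '' S))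
    (hvw : ∀ m ∈ S, ∏ i, v i ^ m i = ∏ i, w i ^ m i) :
    ∏ i, v i ^ d i = ∏ i, w i ^ d i := by
  by_cases hzero : ∃ i, d i ≠ 0 ∧ (v i = 0 ∨ w i = 0)
  · obtain ⟨i, hdi, hvwi⟩ := hzero
    obtain ⟨_, ⟨m, hm, rfl⟩, hmi⟩ := exists_mem_apply_ne_zero_of_mem_closure hd (i := i)
      (by simp [hdi, (expChar_pos K p).ne'])
    replace hmi : m i ≠ 0 := by simpa using hmi
    rcases hvwi with hvi | hwi
    · rw [prod_pow_eq_zero_iff.2 ⟨i, hdi, hvi⟩,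
        prod_pow_eq_zero_of_apply_eq_zero (hS m hm) (hvw m hm) hmi hvi]
    · rw [prod_pow_eq_zero_iff.2 ⟨i, hdi, hwi⟩,
        prod_pow_eq_zero_of_apply_eq_zero (hS m hm) (hvw m hm).symm hmi hwi]
  · push Not at hzero
    exact prod_pow_eq_of_pow_smul_mem_closure_of_ne_zero p hS hd hvw
      (fun i h => (hzero i h).1) (fun i h => (hzero i h).2)

end

theorem monomials_separating_of_closure_char_p_general
    (K : Type*) [Field K] (p : ℕ) [hp : Fact p.Prime]
    [hchar : CharP K p] (n : ℕ)
    (D M : Set (Fin n → ℕ))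
    (ι : (Fin n → ℕ) → (Fin n → ℤ)) (hι : ι = fun m i => (m i : ℤ))
    (hyp : ∀ d ∈ D, ∃ α : ℕ, ((p : ℤ) ^ α) • ι d ∈
      AddSubgroup.closure (ι '' {m | m ∈ M ∧ {i | m i ≠ 0} ⊆ {i | d i ≠ 0}})) :
    ∀ v w : Fin n → K, (∃ d ∈ D, (∏ i, v i ^ d i) ≠ (∏ i, w i ^ d i)) →
      ∃ m ∈ AddSubmonoid.closure M, (∏ i, v i ^ m i) ≠ (∏ i, w i ^ m i) := by
  subst hι
  rintro v w ⟨d, hdD, hd⟩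
  by_contra! hclosure
  obtain ⟨α, hα⟩ := hyp d hdD
  exact hd <| prod_pow_eq_of_pow_smul_mem_closure p (fun m hm => hm.2) hα
    fun m hm => hclosure m (AddSubmonoid.subset_closure hm.1)

/-- positive characteristic version: if for each `d ∈ D` some
`p^α • d` lies in the subgroup generated by the elements of `M` supported in
`supp(d)`, then monomials with exponents in the monoid generated by `M`
separate any points separated by monomials with exponents in `D`. -/
theorem monomials_separating_of_closure_char_p
    (K : Type*) [Field K] [IsAlgClosed K] (p : ℕ) [hp : Fact p.Prime]
    [hchar : CharP K p] (n : ℕ)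
    (D M : Set (Fin n → ℕ)) (hMD : M ⊆ D)
    (ι : (Fin n → ℕ) → (Fin n → ℤ)) (hι : ι = fun m i => (m i : ℤ))
    (hyp : ∀ d ∈ D, ∃ α : ℕ, ((p : ℤ) ^ α) • ι d ∈
      AddSubgroup.closure (ι '' {m | m ∈ M ∧ {i | m i ≠ 0} ⊆ {i | d i ≠ 0}})) :
    ∀ v w : Fin n → K, (∃ d ∈ D, (∏ i, v i ^ d i) ≠ (∏ i, w i ^ d i)) →
      ∃ m ∈ AddSubmonoid.closure M, (∏ i, v i ^ m i) ≠ (∏ i, w i ^ m i) :=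
  monomials_separating_of_closure_char_p_general K p (hp := hp) (hchar := hchar) n D M ι hι hyp
end

section
/- Let D ⊆ ℕ₀ⁿ, M ⊆ D, K a field, and suppose { x^m : m ∈ M } is a separating set for R = K[x^d : d ∈ D] on Kⁿ. Then for any subset J ⊆ {1,…,n}, the set { x^m : m ∈ M, supp(m) ⊆ J } is a separating set for R_J = K[x^d : d ∈ D, supp(d) ⊆ J] on Kⁿ. -/
/-- if the monomials with exponents in `M` separate all points
separated by monomials with exponents in `D`, then for every `J` the monomials
with exponents in `M_J` separate all points separated by monomials with
exponents in `D_J`. -/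
theorem monomials_separating_restrict
    (K : Type*) [Field K] (n : ℕ) (D M : Set (Fin n → ℕ)) (hMD : M ⊆ D)
    (hsep : ∀ v w : Fin n → K,
      (∃ d ∈ D, (∏ i, v i ^ d i) ≠ (∏ i, w i ^ d i)) →
      ∃ m ∈ M, (∏ i, v i ^ m i) ≠ (∏ i, w i ^ m i)) :
    ∀ J : Set (Fin n), ∀ v w : Fin n → K,
      (∃ d ∈ D, {i | d i ≠ 0} ⊆ J ∧ (∏ i, v i ^ d i) ≠ (∏ i, w i ^ d i)) →
      ∃ m ∈ M, {i | m i ≠ 0} ⊆ J ∧ (∏ i, v i ^ m i) ≠ (∏ i, w i ^ m i) := by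
  intro J v w ⟨d, hdD, hdJ, hdne⟩
  classical
  set vJ : Fin n → K := fun i => if i ∈ J then v i else 0 with hvJ
  set wJ : Fin n → K := fun i => if i ∈ J then w i else 0 with hwJ
  have key : ∀ (u : Fin n → K) (e : Fin n → ℕ), {i | e i ≠ 0} ⊆ J →
      (∏ i, (if i ∈ J then u i else 0) ^ e i) = ∏ i, u i ^ e i := by
    intro u e he
    refine Finset.prod_congr rfl fun i _ => ?_
    by_cases hi : i ∈ J
    · simp [hi]
    · have : e i = 0 := by
        by_contra h
        exact hi (he h)
      simp [hi, this]
  have h1 : (∏ i, vJ i ^ d i) ≠ ∏ i, wJ i ^ d i := by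
    rw [hvJ, hwJ, key v d hdJ, key w d hdJ]; exact hdne
  obtain ⟨m, hmM, hmne⟩ := hsep vJ wJ ⟨d, hdD, h1⟩
  have hmJ : {i | m i ≠ 0} ⊆ J := by
    intro i hi
    by_contra hiJ
    apply hmne
    have z : ∀ u : Fin n → K, (∏ j, (if j ∈ J then u j else 0) ^ m j) = 0 := by
      intro u
      apply Finset.prod_eq_zero (Finset.mem_univ i)
      simp [hiJ, zero_pow hi]
    rw [hvJ, hwJ, z v, z w]
  refine ⟨m, hmM, hmJ, ?_⟩
  rw [hvJ, hwJ, key v m hmJ, key w m hmJ] at hmne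
  exact hmne
end

section
/- Let K be a field of characteristic zero, let B ⊆ ℕ₀ⁿ be a submonoid, and let M ⊆ B. Suppose that for every J ⊆ {1,…,n}, the subgroup of ℤⁿ generated by B_J := { b ∈ B : supp(b) ⊆ J } is generated by M_J := { m ∈ M : supp(m) ⊆ J }. Then for all b ∈ B and v, w ∈ Kⁿ with x^b(v) ≠ x^b(w), there exists m in the submonoid generated by M with x^m(v) ≠ x^m(w). -/
/-!
For `b ∈ B` put `J = supp b`. Then `b ∈ B_J`, so the hypothesis writes `b = m - r` with `m, r` in
the monoid generated by `M_J`; thus `b + r = m` and `supp r ⊆ supp b`. If `x^m` and `x^r` agree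
at `v` and `w`, then so does `x^b = x^m / x^r`, unless `x^r` vanishes at them, in which case a
coordinate in `supp b` vanishes and `x^b` is zero at both points.
-/

open Function

def monomialValue {σ R : Type*} [Fintype σ] [CommMonoid R] (c : σ → ℕ) (u : σ → R) : R :=
  ∏ i, u i ^ c i

section monomialValue

variable {σ R : Type*} [Fintype σ]

theorem monomialValue_add [CommMonoid R] (b c : σ → ℕ) (u : σ → R) :
    monomialValue (b + c) u = monomialValue b u * monomialValue c u := by
  simp only [monomialValue, Pi.add_apply, pow_add, Finset.prod_mul_distrib]

theorem monomialValue_eq_zero_iff [CommMonoidWithZero R] [NoZeroDivisors R] [Nontrivial R]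
    {c : σ → ℕ} {u : σ → R} : monomialValue c u = 0 ↔ ∃ i ∈ support c, u i = 0 := by
  simp only [monomialValue, Finset.prod_eq_zero_iff, Finset.mem_univ, true_and,
    pow_eq_zero_iff', mem_support, and_comm]

theorem monomialValue_eq_zero_of_support_subset [CommMonoidWithZero R] [NoZeroDivisors R]
    [Nontrivial R] {b c : σ → ℕ} {u : σ → R} (hcb : support c ⊆ support b)
    (hc : monomialValue c u = 0) : monomialValue b u = 0 := by
  obtain ⟨i, hi, hui⟩ := monomialValue_eq_zero_iff.mp hc
  exact monomialValue_eq_zero_iff.mpr ⟨i, hcb hi, hui⟩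

/-- Cancel `x^r` when it is nonzero; when it vanishes, some coordinate in `supp r ⊆ supp b`
vanishes, so `x^b` vanishes at both points. -/
theorem monomialValue_eq_of_add_eq [CommMonoidWithZero R] [IsCancelMulZero R] [Nontrivial R]
    {b r : σ → ℕ} {v w : σ → R} (hrb : support r ⊆ support b)
    (hsum : monomialValue (b + r) v = monomialValue (b + r) w)
    (hr : monomialValue r v = monomialValue r w) : monomialValue b v = monomialValue b w := by
  by_cases hr0 : monomialValue r v = 0
  · rw [monomialValue_eq_zero_of_support_subset hrb hr0,
      monomialValue_eq_zero_of_support_subset hrb (hr ▸ hr0)]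
  · rw [monomialValue_add, monomialValue_add, hr] at hsum
    exact mul_right_cancel₀ (hr ▸ hr0) hsum

end monomialValue

theorem AddSubgroup.exists_sub_of_mem_closure {G : Type*} [AddCommGroup G] {S : Set G} {x : G}
    (hx : x ∈ AddSubgroup.closure S) :
    ∃ p ∈ AddSubmonoid.closure S, ∃ q ∈ AddSubmonoid.closure S, x = p - q := by
  induction hx using AddSubgroup.closure_induction with
  | mem s hs => exact ⟨s, AddSubmonoid.subset_closure hs, 0, zero_mem _, (sub_zero s).symm⟩
  | zero => exact ⟨0, zero_mem _, 0, zero_mem _, (sub_zero 0).symm⟩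
  | add _ _ _ _ ha hb =>
    obtain ⟨p, hp, q, hq, rfl⟩ := ha
    obtain ⟨p', hp', q', hq', rfl⟩ := hb
    exact ⟨p + p', add_mem hp hp', q + q', add_mem hq hq', by abel⟩
  | neg _ _ ha =>
    obtain ⟨p, hp, q, hq, rfl⟩ := ha
    exact ⟨q, hq, p, hp, neg_sub p q⟩

theorem exists_add_eq_of_map_mem_addSubgroupClosure {A G : Type*} [AddCommMonoid A]
    [AddCommGroup G] {f : A →+ G} (hf : Injective f) {S : Set A} {b : A}
    (hb : f b ∈ AddSubgroup.closure (f '' S)) :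
    ∃ m ∈ AddSubmonoid.closure S, ∃ r ∈ AddSubmonoid.closure S, b + r = m := by
  obtain ⟨p, hp, q, hq, hpq⟩ := AddSubgroup.exists_sub_of_mem_closure hb
  rw [← AddMonoidHom.map_mclosure] at hp hq
  obtain ⟨m, hm, rfl⟩ := hp
  obtain ⟨r, hr, rfl⟩ := hq
  exact ⟨m, hm, r, hr, hf (by rw [map_add, hpq, sub_add_cancel])⟩

theorem support_subset_of_mem_addSubmonoidClosure {σ A : Type*} [AddMonoid A] {J : Set σ}
    {T : Set (σ → A)} (hT : ∀ t ∈ T, support t ⊆ J) {m : σ → A}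
    (hm : m ∈ AddSubmonoid.closure T) : support m ⊆ J := by
  induction hm using AddSubmonoid.closure_induction with
  | mem t ht => exact hT t ht
  | zero => simp
  | add _ _ _ _ ha hb => exact (support_add _ _).trans (Set.union_subset ha hb)

theorem separating_of_closure_eq_general
    (K : Type*) [Field K] (n : ℕ)
    (B : AddSubmonoid (Fin n → ℕ)) (M : Set (Fin n → ℕ))
    (ι : (Fin n → ℕ) → (Fin n → ℤ)) (hι : ι = fun m i => (m i : ℤ))
    (hyp : ∀ J : Set (Fin n),
      AddSubgroup.closure (ι '' {b | b ∈ B ∧ {i | b i ≠ 0} ⊆ J}) =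
      AddSubgroup.closure (ι '' {m | m ∈ M ∧ {i | m i ≠ 0} ⊆ J})) :
    ∀ b ∈ B, ∀ v w : Fin n → K, (∏ i, v i ^ b i) ≠ (∏ i, w i ^ b i) →
      ∃ m ∈ AddSubmonoid.closure M, (∏ i, v i ^ m i) ≠ (∏ i, w i ^ m i) := by
  intro b hb v w hbvw
  by_contra! hsep
  set S := {m | m ∈ M ∧ support m ⊆ support b}
  have hbS : ι b ∈ AddSubgroup.closure (ι '' S) :=
    hyp (support b) ▸ AddSubgroup.subset_closure ⟨b, ⟨hb, subset_rfl⟩, rfl⟩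
  subst hι
  obtain ⟨m, hm, r, hr, rfl⟩ := exists_add_eq_of_map_mem_addSubgroupClosure
    (f := (Nat.castAddMonoidHom ℤ).compLeft (Fin n))
    (by exact (Nat.cast_injective (R := ℤ)).comp_left) hbS
  have hSM : AddSubmonoid.closure S ≤ AddSubmonoid.closure M :=
    AddSubmonoid.closure_mono fun _ hs => hs.1
  exact hbvw <| monomialValue_eq_of_add_eq
    (support_subset_of_mem_addSubmonoidClosure (fun _ hs => hs.2) hr)
    (hsep _ (hSM hm)) (hsep _ (hSM hr))

/-- if for every `J` the subgroup of ℤⁿ generated by `B_J` is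
generated by `M_J`, then monomials with exponents in the monoid generated by
`M` separate any points separated by the invariant monomials `x^b`, `b ∈ B`
(characteristic zero). -/
theorem separating_of_closure_eq
    (K : Type*) [Field K] [CharZero K] (n : ℕ)
    (B : AddSubmonoid (Fin n → ℕ)) (M : Set (Fin n → ℕ))
    (hMB : M ⊆ (B : Set (Fin n → ℕ)))
    (ι : (Fin n → ℕ) → (Fin n → ℤ)) (hι : ι = fun m i => (m i : ℤ))
    (hyp : ∀ J : Set (Fin n),
      AddSubgroup.closure (ι '' {b | b ∈ B ∧ {i | b i ≠ 0} ⊆ J}) =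
      AddSubgroup.closure (ι '' {m | m ∈ M ∧ {i | m i ≠ 0} ⊆ J})) :
    ∀ b ∈ B, ∀ v w : Fin n → K, (∏ i, v i ^ b i) ≠ (∏ i, w i ^ b i) →
      ∃ m ∈ AddSubmonoid.closure M, (∏ i, v i ^ m i) ≠ (∏ i, w i ^ m i) :=
  separating_of_closure_eq_general K n B M ι hι hyp
end
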